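/- arXiv:1403.3517 — 7 statements merged into one kernel-verified Lean document; each statement's English description precedes it below -/
import Mathlib

section
/- Decay estimate toward extinction: assume r ≤ m and let c = min{cSS, cSI, cIS, cII}. If (S, I) is a solution of the reduced system on [0,∞) with S(0) ≥ 0 and I(0) ≥ 0, then the total population W(t) = S(t) + I(t) satisfies 0 ≤ W(t) ≤ W(0)/(1 + W(0)·c·t) for all t ≥ 0. -/
open Filter Topology

/-- `(S, I)` is a solution of the reduced system on `[0, ∞)`. -/
def IsSol (r m β γ μ cSS cSI cIS cII a : ℝ) (S I : ℝ → ℝ) : Prop :=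
  ∀ t : ℝ, 0 ≤ t →
    HasDerivAt S (r * S t + a * r * I t - m * S t
      - (cSS * S t + cSI * I t) * S t - β * S t * I t + γ * I t) t ∧
    HasDerivAt I (-(m * I t) - (cIS * S t + cII * I t) * I t
      + β * S t * I t - γ * I t - μ * I t) t

/-- `(s, i)` is an equilibrium point of the reduced system. -/
def IsEquilibrium (r m β γ μ cSS cSI cIS cII a : ℝ) (s i : ℝ) : Prop :=
  r * s + a * r * i - m * s - (cSS * s + cSI * i) * s - β * s * i + γ * i = 0 ∧
  -(m * i) - (cIS * s + cII * i) * i + β * s * i - γ * i - μ * i = 0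

/-- All parameters are positive and `a ∈ (0, 1)`. -/
def ParamsPos (r m β γ μ cSS cSI cIS cII a : ℝ) : Prop :=
  0 < r ∧ 0 < m ∧ 0 < β ∧ 0 < γ ∧ 0 < μ ∧
    0 < cSS ∧ 0 < cSI ∧ 0 < cIS ∧ 0 < cII ∧ 0 < a ∧ a < 1

/-!
Both populations stay nonnegative: `I' = k(t) I` and `S' ≥ k'(t) S` for continuous rates,
and a linear differential inequality with nonpositive initial value stays nonpositive
(integrating factor). In the total `W = S + I` the transmission terms `β S I`, `γ I` cancel,
and with `r ≤ m`, `a ≤ 1` and `S, I ≥ 0` one gets `W' ≤ -c W²`. Comparison with the logistic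
solution `W₀ / (1 + W₀ c t)` is again a linear inequality: `F = W (1 + W₀ c t) - W₀` satisfies
`F' ≤ -c W F` and `F 0 = 0`.
-/

open Set Real

lemma nonpos_of_hasDerivAt_le_mul {f f' g : ℝ → ℝ} (hg : ContinuousOn g (Ici 0))
    (hf : ∀ t, 0 ≤ t → HasDerivAt f (f' t) t) (hle : ∀ t, 0 ≤ t → f' t ≤ g t * f t)
    (h0 : f 0 ≤ 0) : ∀ t, 0 ≤ t → f t ≤ 0 := by
  -- `g` extended continuously to `ℝ`, so that it has a primitive `G`
  have hg_ext : Continuous fun x => g (max x 0) :=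
    hg.comp_continuous (continuous_id.max continuous_const) fun x => le_max_right x 0
  set G : ℝ → ℝ := fun x => ∫ s in (0 : ℝ)..x, g (max s 0)
  have hG : ∀ t, HasDerivAt G (g (max t 0)) t := fun t =>
    intervalIntegral.integral_hasDerivAt_right (hg_ext.intervalIntegrable _ _)
      hg_ext.stronglyMeasurable.stronglyMeasurableAtFilter hg_ext.continuousAt
  have hF : ∀ t, 0 ≤ t → HasDerivAt (fun x => f x * exp (-G x))
      ((f' t - g t * f t) * exp (-G t)) t := by
    intro t ht
    refine ((hf t ht).mul (hG t).neg.exp).congr_deriv ?_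
    simp only [Pi.neg_apply, max_eq_left ht]
    ring
  have hanti : AntitoneOn (fun x => f x * exp (-G x)) (Ici 0) := by
    refine antitoneOn_of_hasDerivWithinAt_nonpos (f' := fun x => (f' x - g x * f x) * exp (-G x))
      (convex_Ici 0) (HasDerivAt.continuousOn hF) (fun x hx => ?_) (fun x hx => ?_)
    · rw [interior_Ici] at hx
      exact (hF x hx.le).hasDerivWithinAt
    · rw [interior_Ici] at hx
      exact mul_nonpos_of_nonpos_of_nonneg (sub_nonpos.2 (hle x hx.le)) (exp_pos _).le
  intro t ht
  have hFt : f t * exp (-G t) ≤ f 0 := by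
    simpa [G] using hanti self_mem_Ici ht ht
  exact nonpos_of_mul_nonpos_left (hFt.trans h0) (exp_pos _)

lemma le_div_of_hasDerivAt_le_neg_mul_sq {W W' : ℝ → ℝ} {c : ℝ} (hc : 0 ≤ c) (hW0 : 0 ≤ W 0)
    (hW : ∀ t, 0 ≤ t → HasDerivAt W (W' t) t) (hle : ∀ t, 0 ≤ t → W' t ≤ -(c * W t ^ 2)) :
    ∀ t, 0 ≤ t → W t ≤ W 0 / (1 + W 0 * c * t) := by
  have hD : ∀ t, 0 ≤ t → 0 < 1 + W 0 * c * t := fun t ht => by positivity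
  have hF : ∀ t, 0 ≤ t → HasDerivAt (fun s => W s * (1 + W 0 * c * s) - W 0)
      (W' t * (1 + W 0 * c * t) + W t * (W 0 * c)) t := fun t ht => by
    simpa using ((hW t ht).mul (((hasDerivAt_id t).const_mul (W 0 * c)).const_add 1)).sub_const
      (W 0)
  have hFle : ∀ t, 0 ≤ t → W' t * (1 + W 0 * c * t) + W t * (W 0 * c)
      ≤ -(c * W t) * (W t * (1 + W 0 * c * t) - W 0) := fun t ht => by
    nlinarith [mul_le_mul_of_nonneg_right (hle t ht) (hD t ht).le]
  have hg : ContinuousOn (fun t => -(c * W t)) (Ici 0) :=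
    (continuousOn_const.mul (HasDerivAt.continuousOn hW)).neg
  intro t ht
  rw [le_div_iff₀ (hD t ht)]
  have := nonpos_of_hasDerivAt_le_mul hg hF hFle (by simp) t ht
  linarith

lemma reduced_total_rate_le {r m β γ μ cSS cSI cIS cII a c s i : ℝ} (hr : 0 ≤ r) (hrm : r ≤ m)
    (ha : a ≤ 1) (hμ : 0 ≤ μ) (hcSS : c ≤ cSS) (hcSI : c ≤ cSI) (hcIS : c ≤ cIS)
    (hcII : c ≤ cII) (hs : 0 ≤ s) (hi : 0 ≤ i) :
    (r * s + a * r * i - m * s - (cSS * s + cSI * i) * s - β * s * i + γ * i)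
      + (-(m * i) - (cIS * s + cII * i) * i + β * s * i - γ * i - μ * i)
      ≤ -(c * (s + i) ^ 2) := by
  have har : a * r ≤ m := by nlinarith
  nlinarith [mul_le_mul_of_nonneg_right hcSS (mul_nonneg hs hs),
    mul_le_mul_of_nonneg_right hcSI (mul_nonneg hi hs),
    mul_le_mul_of_nonneg_right hcIS (mul_nonneg hs hi),
    mul_le_mul_of_nonneg_right hcII (mul_nonneg hi hi),
    mul_le_mul_of_nonneg_right hrm hs, mul_le_mul_of_nonneg_right har hi, mul_nonneg hμ hi]

namespace IsSol

variable {r m β γ μ cSS cSI cIS cII a : ℝ} {S I : ℝ → ℝ}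

lemma continuousOn_S (hsol : IsSol r m β γ μ cSS cSI cIS cII a S I) : ContinuousOn S (Ici 0) :=
  HasDerivAt.continuousOn fun t ht => (hsol t ht).1

lemma continuousOn_I (hsol : IsSol r m β γ μ cSS cSI cIS cII a S I) : ContinuousOn I (Ici 0) :=
  HasDerivAt.continuousOn fun t ht => (hsol t ht).2

lemma I_nonneg (hsol : IsSol r m β γ μ cSS cSI cIS cII a S I) (hI0 : 0 ≤ I 0) :
    ∀ t, 0 ≤ t → 0 ≤ I t := by
  have hS := hsol.continuousOn_S
  have hI := hsol.continuousOn_I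
  have hg : ContinuousOn (fun t => -m - (cIS * S t + cII * I t) + β * S t - γ - μ) (Ici 0) := by
    fun_prop
  have := nonpos_of_hasDerivAt_le_mul (f := fun t => -I t) hg (fun t ht => (hsol t ht).2.neg)
    (fun t _ => (by ring : _ = _).le) (neg_nonpos.2 hI0)
  exact fun t ht => neg_nonpos.1 (this t ht)

lemma S_nonneg (hsol : IsSol r m β γ μ cSS cSI cIS cII a S I) (hr : 0 ≤ r) (ha : 0 ≤ a)
    (hγ : 0 ≤ γ) (hS0 : 0 ≤ S 0) (hI0 : 0 ≤ I 0) : ∀ t, 0 ≤ t → 0 ≤ S t := by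
  have hS := hsol.continuousOn_S
  have hI := hsol.continuousOn_I
  have hg : ContinuousOn (fun t => r - m - (cSS * S t + cSI * I t) - β * I t) (Ici 0) := by
    fun_prop
  have hinflow : ∀ t, 0 ≤ t → 0 ≤ (a * r + γ) * I t := fun t ht =>
    mul_nonneg (by positivity) (hsol.I_nonneg hI0 t ht)
  have := nonpos_of_hasDerivAt_le_mul (f := fun t => -S t) hg (fun t ht => (hsol t ht).1.neg)
    (fun t ht => by nlinarith [hinflow t ht]) (neg_nonpos.2 hS0)
  exact fun t ht => neg_nonpos.1 (this t ht)

lemma hasDerivAt_add (hsol : IsSol r m β γ μ cSS cSI cIS cII a S I) {t : ℝ} (ht : 0 ≤ t) :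
    HasDerivAt (fun x => S x + I x)
      ((r * S t + a * r * I t - m * S t - (cSS * S t + cSI * I t) * S t - β * S t * I t + γ * I t)
        + (-(m * I t) - (cIS * S t + cII * I t) * I t + β * S t * I t - γ * I t - μ * I t)) t :=
  (hsol t ht).1.add (hsol t ht).2

end IsSol

/-- Decay estimate toward extinction when `r ≤ m`. -/
theorem extinction_decay_estimate
    (r m β γ μ cSS cSI cIS cII a : ℝ)
    (hp : ParamsPos r m β γ μ cSS cSI cIS cII a)
    (hrm : r ≤ m)
    (S I : ℝ → ℝ) (hsol : IsSol r m β γ μ cSS cSI cIS cII a S I)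
    (hS0 : 0 ≤ S 0) (hI0 : 0 ≤ I 0) :
    ∀ t : ℝ, 0 ≤ t →
      0 ≤ S t + I t ∧
      S t + I t ≤ (S 0 + I 0) /
        (1 + (S 0 + I 0) * min (min cSS cSI) (min cIS cII) * t) := by
  obtain ⟨hr, -, -, hγ, hμ, hcSS, hcSI, hcIS, hcII, ha0, ha1⟩ := hp
  have hS := hsol.S_nonneg hr.le ha0.le hγ.le hS0 hI0
  have hI := hsol.I_nonneg hI0
  have hc : 0 ≤ min (min cSS cSI) (min cIS cII) := by positivity
  have hW := le_div_of_hasDerivAt_le_neg_mul_sq (W := fun t => S t + I t) hc (add_nonneg hS0 hI0)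
    (fun t ht => hsol.hasDerivAt_add ht) fun t ht =>
      reduced_total_rate_le hr.le hrm ha1.le hμ.le
        ((min_le_left _ _).trans (min_le_left _ _)) ((min_le_left _ _).trans (min_le_right _ _))
        ((min_le_right _ _).trans (min_le_left _ _)) ((min_le_right _ _).trans (min_le_right _ _))
        (hS t ht) (hI t ht)
  exact fun t ht => ⟨add_nonneg (hS t ht) (hI t ht), hW t ht⟩
end

section
/- (Proposition 1) If r ≤ m, then every solution (S, I) of the reduced system on [0,∞) with nonnegative initial conditions S(0) ≥ 0, I(0) ≥ 0 satisfies (S(t), I(t)) → (0, 0) as t → ∞. -/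
open Filter Topology

open Set

/-
Along a solution, the total population `W = S + I` satisfies `W' ≤ -(c/2) W²` with
`c = min cSS cII` as soon as both components are nonnegative, because `r ≤ m` (hence `a r ≤ m`)
makes every linear term nonpositive. A nonnegative function with `W' ≤ -k W²` decreases to `0`:
if it stayed above `ε`, it would drop at rate at least `k ε²` forever.
Nonnegativity comes first: `I' = g I`, and `S' ≥ h S` once `I ≥ 0`, for continuous `g, h`; the
integrating factor `exp (-∫ g)` turns each of these into monotonicity of `I exp (-∫ g)`, resp.
`S exp (-∫ h)`.
-/

lemma monotoneOn_Ici_of_hasDerivAt_nonneg {f f' : ℝ → ℝ} {a : ℝ}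
    (hf : ∀ t ≥ a, HasDerivAt f (f' t) t) (hf' : ∀ t ≥ a, 0 ≤ f' t) :
    MonotoneOn f (Ici a) :=
  monotoneOn_of_hasDerivWithinAt_nonneg (convex_Ici a)
    (fun t ht => (hf t ht).continuousAt.continuousWithinAt)
    (fun t ht => (hf t (interior_subset ht)).hasDerivWithinAt)
    (fun t ht => hf' t (interior_subset ht))

lemma antitoneOn_Ici_of_hasDerivAt_nonpos {f f' : ℝ → ℝ} {a : ℝ}
    (hf : ∀ t ≥ a, HasDerivAt f (f' t) t) (hf' : ∀ t ≥ a, f' t ≤ 0) :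
    AntitoneOn f (Ici a) :=
  antitoneOn_of_hasDerivWithinAt_nonpos (convex_Ici a)
    (fun t ht => (hf t ht).continuousAt.continuousWithinAt)
    (fun t ht => (hf t (interior_subset ht)).hasDerivWithinAt)
    (fun t ht => hf' t (interior_subset ht))

lemma nonneg_of_hasDerivAt_ge_mul {f f' g : ℝ → ℝ} (hg : ContinuousOn g (Ici 0))
    (hf : ∀ t ≥ 0, HasDerivAt f (f' t) t) (hle : ∀ t ≥ 0, g t * f t ≤ f' t) (h0 : 0 ≤ f 0) :
    ∀ t ≥ 0, 0 ≤ f t := by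
  -- `g` is only known on `[0, ∞)`; precomposing with `max · 0` makes it continuous everywhere.
  set g₀ : ℝ → ℝ := fun t => g (max t 0)
  have hg₀ : Continuous g₀ :=
    hg.comp_continuous (continuous_id.max continuous_const) fun t => le_max_right t 0
  set G : ℝ → ℝ := fun t => ∫ s in (0 : ℝ)..t, g₀ s
  have hG : ∀ t, HasDerivAt G (g₀ t) t := fun t => (hg₀.integral_hasStrictDerivAt 0 t).hasDerivAt
  have hmono : MonotoneOn (fun t => f t * Real.exp (-G t)) (Ici 0) := by
    refine monotoneOn_Ici_of_hasDerivAt_nonneg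
      (fun t ht => (hf t ht).mul ((hG t).neg.exp)) fun t ht => ?_
    have hgt : g₀ t = g t := by simp only [g₀, max_eq_left ht]
    have : 0 ≤ (f' t - g t * f t) * Real.exp (-G t) :=
      mul_nonneg (sub_nonneg.2 (hle t ht)) (Real.exp_pos _).le
    rw [hgt, Pi.neg_apply]
    linarith
  intro t ht
  have h := hmono self_mem_Ici (mem_Ici.2 ht) ht
  simp only [G, intervalIntegral.integral_same, neg_zero, Real.exp_zero, mul_one] at h
  exact nonneg_of_mul_nonneg_left (h0.trans h) (Real.exp_pos _)

lemma tendsto_zero_of_hasDerivAt_le_neg_mul_sq {W W' : ℝ → ℝ} {k : ℝ} (hk : 0 < k)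
    (hW : ∀ t ≥ 0, HasDerivAt W (W' t) t) (hnn : ∀ t ≥ 0, 0 ≤ W t)
    (hle : ∀ t ≥ 0, W' t ≤ -k * W t ^ 2) :
    Tendsto W atTop (𝓝 0) := by
  have hanti : AntitoneOn W (Ici 0) := antitoneOn_Ici_of_hasDerivAt_nonpos hW fun t ht => by
    nlinarith [hle t ht, sq_nonneg (W t)]
  have hsmall : ∀ ε > 0, ∃ T ≥ 0, W T < ε := by
    intro ε hε
    by_contra! hbig
    have hdrop : AntitoneOn (fun t => W t + k * ε ^ 2 * t) (Ici 0) := by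
      refine antitoneOn_Ici_of_hasDerivAt_nonpos
        (fun t ht => (hW t ht).add ((hasDerivAt_id t).const_mul _)) fun t ht => ?_
      have : ε ^ 2 ≤ W t ^ 2 := pow_le_pow_left₀ hε.le (hbig t ht) 2
      nlinarith [hle t ht]
    set T := W 0 / (k * ε ^ 2)
    have hT : 0 ≤ T := div_nonneg (hnn 0 le_rfl) (by positivity)
    have h := hdrop self_mem_Ici (mem_Ici.2 hT) hT
    have hkT : k * ε ^ 2 * T = W 0 := mul_div_cancel₀ _ (by positivity)
    simp only [mul_zero, add_zero, hkT] at h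
    linarith [hbig T hT]
  refine tendsto_order.2 ⟨fun x hx => ?_, fun x hx => ?_⟩
  · filter_upwards [eventually_ge_atTop 0] with t ht
    exact hx.trans_le (hnn t ht)
  · obtain ⟨T, hT, hWT⟩ := hsmall x hx
    filter_upwards [eventually_ge_atTop T] with t ht
    exact (hanti (mem_Ici.2 hT) (mem_Ici.2 (hT.trans ht)) ht).trans_lt hWT

lemma tendsto_prodMk_zero_of_nonneg_of_tendsto_add {α : Type*} {f g : α → ℝ} {l : Filter α}
    (hf : ∀ᶠ t in l, 0 ≤ f t) (hg : ∀ᶠ t in l, 0 ≤ g t)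
    (hfg : Tendsto (fun t => f t + g t) l (𝓝 0)) :
    Tendsto (fun t => (f t, g t)) l (𝓝 (0, 0)) := by
  refine Tendsto.prodMk_nhds ?_ ?_
  · refine tendsto_of_tendsto_of_tendsto_of_le_of_le' tendsto_const_nhds hfg hf ?_
    filter_upwards [hg] with t ht
    linarith
  · refine tendsto_of_tendsto_of_tendsto_of_le_of_le' tendsto_const_nhds hfg hg ?_
    filter_upwards [hf] with t ht
    linarith

section ReducedSystem

variable {r m β γ μ cSS cSI cIS cII a : ℝ} {S I : ℝ → ℝ}

lemma IsSol.continuousOn_fst (hsol : IsSol r m β γ μ cSS cSI cIS cII a S I) :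
    ContinuousOn S (Ici 0) :=
  fun t ht => (hsol t ht).1.continuousAt.continuousWithinAt

lemma IsSol.continuousOn_snd (hsol : IsSol r m β γ μ cSS cSI cIS cII a S I) :
    ContinuousOn I (Ici 0) :=
  fun t ht => (hsol t ht).2.continuousAt.continuousWithinAt

lemma IsSol.snd_nonneg (hsol : IsSol r m β γ μ cSS cSI cIS cII a S I)
    (hI0 : 0 ≤ I 0) : ∀ t ≥ 0, 0 ≤ I t :=
  nonneg_of_hasDerivAt_ge_mul (g := fun t => -m - (cIS * S t + cII * I t) + β * S t - γ - μ)
    (by have := hsol.continuousOn_fst; have := hsol.continuousOn_snd; fun_prop)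
    (fun t ht => (hsol t ht).2) (fun t _ => le_of_eq (by ring)) hI0

lemma IsSol.fst_nonneg (hsol : IsSol r m β γ μ cSS cSI cIS cII a S I)
    (hp : ParamsPos r m β γ μ cSS cSI cIS cII a) (hI0 : 0 ≤ I 0) (hS0 : 0 ≤ S 0) :
    ∀ t ≥ 0, 0 ≤ S t := by
  obtain ⟨hr, -, -, hγ, -, -, -, -, -, ha, -⟩ := hp
  refine nonneg_of_hasDerivAt_ge_mul (g := fun t => r - m - (cSS * S t + cSI * I t) - β * I t)
    (by have := hsol.continuousOn_fst; have := hsol.continuousOn_snd; fun_prop)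
    (fun t ht => (hsol t ht).1) (fun t ht => ?_) hS0
  -- the source term `(a r + γ) I` is nonnegative
  nlinarith [mul_nonneg (by positivity : (0 : ℝ) ≤ a * r + γ) (hsol.snd_nonneg hI0 t ht)]

lemma vectorField_add_le (hp : ParamsPos r m β γ μ cSS cSI cIS cII a) (hrm : r ≤ m)
    {s i : ℝ} (hs : 0 ≤ s) (hi : 0 ≤ i) :
    (r * s + a * r * i - m * s - (cSS * s + cSI * i) * s - β * s * i + γ * i)
      + (-(m * i) - (cIS * s + cII * i) * i + β * s * i - γ * i - μ * i)
      ≤ -(min cSS cII / 2) * (s + i) ^ 2 := by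
  obtain ⟨hr, -, -, -, hμ, hcSS, hcSI, hcIS, hcII, -, ha1⟩ := hp
  have har : a * r ≤ m := by nlinarith
  have h1 : min cSS cII ≤ cSS := min_le_left _ _
  have h2 : min cSS cII ≤ cII := min_le_right _ _
  nlinarith [mul_nonneg (sub_nonneg.2 h1) (mul_nonneg hs hs),
    mul_nonneg (sub_nonneg.2 h2) (mul_nonneg hi hi),
    mul_nonneg (add_pos hcSI hcIS).le (mul_nonneg hs hi),
    mul_nonneg (lt_min hcSS hcII).le (sq_nonneg (s - i)),
    mul_nonneg (sub_nonneg.2 hrm) hs, mul_nonneg (by linarith : 0 ≤ m + μ - a * r) hi]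

end ReducedSystem

/-- Proposition 1: if `r ≤ m` every nonnegative solution tends to the origin. -/
theorem prop1_extinction
    (r m β γ μ cSS cSI cIS cII a : ℝ)
    (hp : ParamsPos r m β γ μ cSS cSI cIS cII a)
    (hrm : r ≤ m)
    (S I : ℝ → ℝ) (hsol : IsSol r m β γ μ cSS cSI cIS cII a S I)
    (hS0 : 0 ≤ S 0) (hI0 : 0 ≤ I 0) :
    Tendsto (fun t => (S t, I t)) atTop (𝓝 ((0 : ℝ), (0 : ℝ))) := by
  have hI := hsol.snd_nonneg hI0
  have hS := hsol.fst_nonneg hp hI0 hS0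
  have hc : 0 < min cSS cII / 2 := by
    obtain ⟨-, -, -, -, -, hcSS, -, -, hcII, -⟩ := hp
    positivity
  have hsum : Tendsto (fun t => S t + I t) atTop (𝓝 0) :=
    tendsto_zero_of_hasDerivAt_le_neg_mul_sq hc
      (fun t ht => (hsol t ht).1.add (hsol t ht).2)
      (fun t ht => add_nonneg (hS t ht) (hI t ht))
      (fun t ht => vectorField_add_le hp hrm (hS t ht) (hI t ht))
  exact tendsto_prodMk_zero_of_nonneg_of_tendsto_add
    (eventually_ge_atTop 0 |>.mono hS) (eventually_ge_atTop 0 |>.mono hI) hsum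
end

section
/- (Proposition 2) Assume r > m and let c = min{cSS, cSI, cIS, cII}. If (S, I) is a solution of the reduced system on [0,∞) with S(0) ≥ 0 and I(0) ≥ 0, then S(t) + I(t) ≤ max{S(0) + I(0), (r − m)/c} for all t ≥ 0; in particular the solution is bounded on [0,∞). -/
open Filter Topology

/-- For a function continuous on `[0,∞)` with `u 0 ≤ b`, on any interval `[0, t₁]`
there is a "last time" `t₀` with `u t₀ ≤ b` such that `u > b` strictly afterwards. -/
lemma key_sup (u : ℝ → ℝ) (t₁ b : ℝ) (ht₁ : 0 ≤ t₁)
    (hc : ∀ s, 0 ≤ s → ContinuousAt u s)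
    (h0 : u 0 ≤ b) :
    ∃ t₀ ∈ Set.Icc (0:ℝ) t₁, u t₀ ≤ b ∧ ∀ s, t₀ < s → s ≤ t₁ → b < u s := by
  set A := {s : ℝ | s ∈ Set.Icc (0:ℝ) t₁ ∧ u s ≤ b} with hA
  have hne : A.Nonempty := ⟨0, ⟨le_refl _, ht₁⟩, h0⟩
  have hbdd : BddAbove A := ⟨t₁, fun s hs => hs.1.2⟩
  set t₀ := sSup A with ht₀def
  have ht₀mem : t₀ ∈ Set.Icc (0:ℝ) t₁ := by
    constructor
    · exact le_csSup hbdd ⟨⟨le_refl _, ht₁⟩, h0⟩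
    · exact csSup_le hne fun s hs => hs.1.2
  refine ⟨t₀, ht₀mem, ?_, ?_⟩
  · have hcl : t₀ ∈ closure A := csSup_mem_closure hne hbdd
    have hnb : (𝓝[A] t₀).NeBot := mem_closure_iff_nhdsWithin_neBot.mp hcl
    have htend : Tendsto u (𝓝[A] t₀) (𝓝 (u t₀)) :=
      ((hc t₀ ht₀mem.1).tendsto).mono_left nhdsWithin_le_nhds
    exact le_of_tendsto htend (eventually_nhdsWithin_of_forall fun s hs => hs.2)
  · intro s hs hst
    by_contra hle
    push_neg at hle
    have hsA : s ∈ A := ⟨⟨le_trans ht₀mem.1 hs.le, hst⟩, hle⟩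
    exact absurd (le_csSup hbdd hsA) (not_le.mpr hs)

/-- Gronwall-type lemma: if `u' ≥ g·u` whenever `u < 0` (with `g` continuous)
and `u 0 ≥ 0`, then `u` stays nonnegative. -/
lemma stay_nonneg (u d g : ℝ → ℝ)
    (hu : ∀ s, 0 ≤ s → HasDerivAt u (d s) s)
    (hgc : ∀ s, 0 ≤ s → ContinuousAt g s)
    (hlin : ∀ s, 0 ≤ s → u s < 0 → g s * u s ≤ d s)
    (h0 : 0 ≤ u 0) : ∀ t, 0 ≤ t → 0 ≤ u t := by
  intro t ht
  by_contra hneg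
  push_neg at hneg
  have hcu : ∀ s, 0 ≤ s → ContinuousAt u s := fun s hs => (hu s hs).continuousAt
  obtain ⟨t₀, ht₀mem, hut₀, hgt⟩ := key_sup (fun s => -u s) t 0 ht
    (fun s hs => (hcu s hs).neg) (by show -u 0 ≤ 0; linarith)
  -- bound g above on [t₀, t]
  have hsub : Set.Icc t₀ t ⊆ Set.Ici (0:ℝ) := fun s hs => le_trans ht₀mem.1 hs.1
  obtain ⟨x, hx, hmax⟩ := isCompact_Icc.exists_isMaxOn
    (Set.nonempty_Icc.mpr ht₀mem.2)
    (fun s hs => (hgc s (hsub hs)).continuousWithinAt)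
  have hmax : ∀ s ∈ Set.Icc t₀ t, g s ≤ g x := hmax
  set L := g x with hLdef
  set h : ℝ → ℝ := fun s => u s * Real.exp (-L * s) with hhdef
  have hder : ∀ s, 0 ≤ s →
      HasDerivAt h (d s * Real.exp (-L * s) + u s * (Real.exp (-L * s) * (-L * 1))) s := by
    intro s hs
    exact (hu s hs).mul (((hasDerivAt_id s).const_mul (-L)).exp)
  have hmono : MonotoneOn h (Set.Icc t₀ t) := by
    apply monotoneOn_of_deriv_nonneg (convex_Icc _ _)
    · exact fun s hs => ((hder s (hsub hs)).continuousAt).continuousWithinAt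
    · intro s hs
      rw [interior_Icc] at hs
      exact ((hder s (le_trans ht₀mem.1 hs.1.le)).differentiableAt).differentiableWithinAt
    · intro s hs
      rw [interior_Icc] at hs
      have hs0 : (0:ℝ) ≤ s := le_trans ht₀mem.1 hs.1.le
      rw [(hder s hs0).deriv]
      have hus : u s < 0 := by have := hgt s hs.1 hs.2.le; linarith
      have hgL : g s ≤ L := hmax s ⟨hs.1.le, hs.2.le⟩
      have hd : g s * u s ≤ d s := hlin s hs0 hus
      have hE : 0 < Real.exp (-L * s) := Real.exp_pos _
      nlinarith [mul_le_mul_of_nonneg_right (hd.trans' (by nlinarith : L * u s ≤ g s * u s)) hE.le]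
  have h1 : h t₀ ≤ h t := hmono (Set.left_mem_Icc.mpr ht₀mem.2)
    (Set.right_mem_Icc.mpr ht₀mem.2) ht₀mem.2
  have hE0 : 0 < Real.exp (-L * t₀) := Real.exp_pos _
  have hE1 : 0 < Real.exp (-L * t) := Real.exp_pos _
  have hu0 : 0 ≤ u t₀ := by simpa using hut₀
  simp only [hhdef] at h1
  nlinarith

/-- Proposition 2: if `r > m` every nonnegative solution is bounded. -/
theorem prop2_bounded
    (r m β γ μ cSS cSI cIS cII a : ℝ)
    (hp : ParamsPos r m β γ μ cSS cSI cIS cII a)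
    (hrm : m < r)
    (S I : ℝ → ℝ) (hsol : IsSol r m β γ μ cSS cSI cIS cII a S I)
    (hS0 : 0 ≤ S 0) (hI0 : 0 ≤ I 0) :
    ∀ t : ℝ, 0 ≤ t →
      S t + I t ≤ max (S 0 + I 0) ((r - m) / min (min cSS cSI) (min cIS cII)) := by
  obtain ⟨hr, hm, hβ, hγ, hμ, hcSS, hcSI, hcIS, hcII, ha0, ha1⟩ := hp
  set c : ℝ := min (min cSS cSI) (min cIS cII) with hcdef
  have hc : 0 < c := lt_min (lt_min hcSS hcSI) (lt_min hcIS hcII)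
  have hc1 : c ≤ cSS := le_trans (min_le_left _ _) (min_le_left _ _)
  have hc2 : c ≤ cSI := le_trans (min_le_left _ _) (min_le_right _ _)
  have hc3 : c ≤ cIS := le_trans (min_le_right _ _) (min_le_left _ _)
  have hc4 : c ≤ cII := le_trans (min_le_right _ _) (min_le_right _ _)
  have hcS : ∀ s, 0 ≤ s → ContinuousAt S s :=
    fun s hs => (hsol s hs).1.differentiableAt.continuousAt
  have hcI : ∀ s, 0 ≤ s → ContinuousAt I s :=
    fun s hs => (hsol s hs).2.differentiableAt.continuousAt
  -- I stays nonnegative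
  have hI : ∀ t, 0 ≤ t → 0 ≤ I t := by
    apply stay_nonneg I
      (fun s => -(m * I s) - (cIS * S s + cII * I s) * I s + β * S s * I s - γ * I s - μ * I s)
      (fun s => -m - (cIS * S s + cII * I s) + β * S s - γ - μ)
      (fun s hs => (hsol s hs).2)
    · intro s hs
      have h1 := hcS s hs
      have h2 := hcI s hs
      fun_prop
    · intro s hs _
      apply le_of_eq; ring
    · exact hI0
  -- S stays nonnegative
  have hS : ∀ t, 0 ≤ t → 0 ≤ S t := by
    apply stay_nonneg S
      (fun s => r * S s + a * r * I s - m * S s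
        - (cSS * S s + cSI * I s) * S s - β * S s * I s + γ * I s)
      (fun s => r - m - (cSS * S s + cSI * I s) - β * I s)
      (fun s hs => (hsol s hs).1)
    · intro s hs
      have h1 := hcS s hs
      have h2 := hcI s hs
      fun_prop
    · intro s hs _
      have hIs := hI s hs
      nlinarith [mul_nonneg (mul_nonneg ha0.le hr.le) hIs, mul_nonneg hγ.le hIs]
    · exact hS0
  -- total population
  set N : ℝ → ℝ := fun s => S s + I s with hNdef
  set dN : ℝ → ℝ := fun s =>
    (r * S s + a * r * I s - m * S s - (cSS * S s + cSI * I s) * S s - β * S s * I s + γ * I s)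
    + (-(m * I s) - (cIS * S s + cII * I s) * I s + β * S s * I s - γ * I s - μ * I s)
    with hdNdef
  have hNder : ∀ s, 0 ≤ s → HasDerivAt N (dN s) s :=
    fun s hs => (hsol s hs).1.add (hsol s hs).2
  set K : ℝ := (r - m) / c with hKdef
  have hK : 0 < K := div_pos (by linarith) hc
  have hcK : c * K = r - m := by
    rw [hKdef]; field_simp
  set M : ℝ := max (N 0) K with hMdef
  have hKM : K ≤ M := le_max_right _ _
  -- key derivative bound
  have hkey : ∀ s, 0 ≤ s → M < N s → dN s ≤ 0 := by
    intro s hs hgt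
    have hSs := hS s hs
    have hIs := hI s hs
    have hNs : K < N s := lt_of_le_of_lt hKM hgt
    have h1 : dN s ≤ (r - m) * N s - c * (N s)^2 := by
      simp only [hdNdef, hNdef]
      nlinarith [mul_nonneg hSs hIs, mul_nonneg (mul_nonneg hr.le (by linarith : (0:ℝ) ≤ 1 - a)) hIs,
        mul_nonneg hμ.le hIs,
        mul_nonneg (sub_nonneg.2 hc1) (mul_nonneg hSs hSs),
        mul_nonneg (sub_nonneg.2 hc2) (mul_nonneg hSs hIs),
        mul_nonneg (sub_nonneg.2 hc3) (mul_nonneg hSs hIs),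
        mul_nonneg (sub_nonneg.2 hc4) (mul_nonneg hIs hIs)]
    have h2 : (r - m) * N s - c * (N s)^2 ≤ 0 := by
      have hNpos : 0 < N s := lt_trans hK hNs
      nlinarith [mul_lt_mul_of_pos_left hNs hc]
    linarith
  -- conclusion
  intro t ht
  by_contra hcon
  push_neg at hcon
  obtain ⟨t₀, ht₀mem, hNt₀, hafter⟩ := key_sup N t M ht
    (fun s hs => ((hcS s hs).add (hcI s hs))) (le_max_left _ _)
  have hanti : AntitoneOn N (Set.Icc t₀ t) := by
    apply antitoneOn_of_deriv_nonpos (convex_Icc _ _)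
    · exact fun s hs => ((hNder s (le_trans ht₀mem.1 hs.1)).continuousAt).continuousWithinAt
    · intro s hs
      rw [interior_Icc] at hs
      exact ((hNder s (le_trans ht₀mem.1 hs.1.le)).differentiableAt).differentiableWithinAt
    · intro s hs
      rw [interior_Icc] at hs
      have hs0 : (0:ℝ) ≤ s := le_trans ht₀mem.1 hs.1.le
      rw [(hNder s hs0).deriv]
      exact hkey s hs0 (hafter s hs.1 hs.2.le)
  have := hanti (Set.left_mem_Icc.mpr ht₀mem.2) (Set.right_mem_Icc.mpr ht₀mem.2) ht₀mem.2
  have : N t ≤ M := le_trans this hNt₀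
  exact absurd this (not_le.mpr hcon)
end

section
/- If r > m, then the only solution of the reduced system that remains in the closed positive quadrant for all t ≥ 0 and tends to (0,0) as t → ∞ is the identically zero solution; that is, if S(t) ≥ 0, I(t) ≥ 0 for all t ≥ 0 and (S(t), I(t)) → (0,0) as t → ∞, then S(t) = 0 and I(t) = 0 for all t ≥ 0. -/
/-!
Near the origin the linear growth rate `r - m` of `S` dominates, so `S' ≥ 0` there: along a
nonnegative solution tending to the origin, `S` is eventually nondecreasing with limit `0`, hence
eventually zero. Backwards in time, `S' ≥ -K S` on every compact interval, where `K` bounds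
`cSS S + cSI I + β I` there, so `e^{K t} S` is nondecreasing and `S` vanishes on all of `[0, ∞)`. Then `0 = S' = (a r + γ) I` forces `I = 0`.
-/

open Filter Topology

open Set

def reducedRhsS (r m β γ cSS cSI a : ℝ) (s i : ℝ) : ℝ :=
  r * s + a * r * i - m * s - (cSS * s + cSI * i) * s - β * s * i + γ * i

theorem MonotoneOn.le_of_tendsto_atTop {α β : Type*} [TopologicalSpace α] [Preorder α]
    [OrderClosedTopology α] [Preorder β] [IsDirectedOrder β] {f : β → α} {a : α} {T b : β}
    (hf : MonotoneOn f (Ici T)) (ha : Tendsto f atTop (𝓝 a)) (hb : T ≤ b) : f b ≤ a :=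
  haveI : Nonempty β := ⟨b⟩
  ge_of_tendsto ha <| (eventually_ge_atTop b).mono fun _ hbt => hf hb (hb.trans hbt) hbt

theorem HasDerivAt.eq_zero_of_eqOn_Ici {E : Type*} [NormedAddCommGroup E] [NormedSpace ℝ E]
    {g : ℝ → E} {g' : E} {a x : ℝ} (h : HasDerivAt g g' x) (hx : a ≤ x)
    (hg : EqOn g 0 (Ici a)) : g' = 0 :=
  (uniqueDiffOn_Ici a x hx).eq_deriv _ h.hasDerivWithinAt
    ((hasDerivWithinAt_const x _ 0).congr hg (hg hx))

section Comparison

variable {f f' : ℝ → ℝ}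

theorem monotoneOn_exp_mul_of_mul_le_deriv {s : Set ℝ} (hs : Convex ℝ s) (k : ℝ)
    (hf : ∀ t ∈ s, HasDerivAt f (f' t) t) (hk : ∀ t ∈ s, k * f t ≤ f' t) :
    MonotoneOn (fun t => Real.exp (-k * t) * f t) s := by
  have hg : ∀ t ∈ s, HasDerivAt (fun t => Real.exp (-k * t) * f t)
      (Real.exp (-k * t) * (f' t - k * f t)) t := fun t ht =>
    ((((hasDerivAt_id' t).const_mul (-k)).exp).mul (hf t ht)).congr_deriv (by ring)
  refine monotoneOn_of_hasDerivWithinAt_nonneg hs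
    (fun t ht => (hg t ht).continuousAt.continuousWithinAt)
    (fun t ht => (hg t (interior_subset ht)).hasDerivWithinAt) fun t ht => ?_
  exact mul_nonneg (Real.exp_pos _).le (sub_nonneg.2 (hk t (interior_subset ht)))

theorem eq_zero_of_mul_le_deriv_of_eq_zero {c : ℝ → ℝ} {a b : ℝ} (hab : a ≤ b)
    (hf : ∀ t ∈ Icc a b, HasDerivAt f (f' t) t) (hc : ContinuousOn c (Icc a b))
    (hcf : ∀ t ∈ Icc a b, c t * f t ≤ f' t) (hf₀ : ∀ t ∈ Icc a b, 0 ≤ f t) (hb : f b = 0) :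
    f a = 0 := by
  obtain ⟨u, -, hu⟩ := isCompact_Icc.exists_isMinOn (nonempty_Icc.2 hab) hc
  have hmono := monotoneOn_exp_mul_of_mul_le_deriv (convex_Icc a b) (c u) hf fun t ht =>
    (mul_le_mul_of_nonneg_right (hu ht) (hf₀ t ht)).trans (hcf t ht)
  have hle := hmono (left_mem_Icc.2 hab) (right_mem_Icc.2 hab) hab
  simp only [hb, mul_zero] at hle
  exact le_antisymm (nonpos_of_mul_nonpos_right hle (Real.exp_pos _))
    (hf₀ a (left_mem_Icc.2 hab))

end Comparison

section ReducedSystem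

variable {r m β γ μ cSS cSI cIS cII a s i : ℝ} {S I : ℝ → ℝ}

theorem reducedRhsS_nonneg (hs : 0 ≤ s) (hi : 0 ≤ i) (hcomp : cSS * s + cSI * i ≤ r - m)
    (hinf : β * s ≤ a * r + γ) : 0 ≤ reducedRhsS r m β γ cSS cSI a s i := by
  unfold reducedRhsS
  nlinarith [mul_nonneg (sub_nonneg.2 hcomp) hs, mul_nonneg (sub_nonneg.2 hinf) hi]

theorem neg_mul_le_reducedRhsS (hs : 0 ≤ s) (hi : 0 ≤ i) (hrm : m ≤ r) (hinf : 0 ≤ a * r + γ) :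
    -(cSS * s + cSI * i + β * i) * s ≤ reducedRhsS r m β γ cSS cSI a s i := by
  unfold reducedRhsS
  nlinarith [mul_nonneg (sub_nonneg.2 hrm) hs, mul_nonneg hinf hi]

theorem reducedRhsS_zero_left : reducedRhsS r m β γ cSS cSI a 0 i = (a * r + γ) * i := by
  unfold reducedRhsS
  ring

theorem IsSol.exists_forall_ge_S_eq_zero (hsol : IsSol r m β γ μ cSS cSI cIS cII a S I)
    (hnonneg : ∀ t, 0 ≤ t → 0 ≤ S t ∧ 0 ≤ I t) (hrm : m < r) (hinf : 0 < a * r + γ)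
    (hSlim : Tendsto S atTop (𝓝 0)) (hIlim : Tendsto I atTop (𝓝 0)) :
    ∃ T, ∀ t ≥ T, S t = 0 := by
  obtain ⟨T, hT⟩ := eventually_atTop.1 <|
    (((hSlim.const_mul cSS).add (hIlim.const_mul cSI)).eventually_le_const
      (by simpa using hrm : cSS * 0 + cSI * 0 < r - m)).and
    ((hSlim.const_mul β).eventually_le_const (by simpa using hinf : β * 0 < a * r + γ))
  set T₀ := max T 0
  have hmono : MonotoneOn S (Ici T₀) := by
    refine monotoneOn_of_hasDerivWithinAt_nonneg (convex_Ici T₀)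
      (fun t ht => (hsol t (le_sup_right.trans ht)).1.continuousAt.continuousWithinAt)
      (fun t ht => (hsol t (le_sup_right.trans (interior_subset ht))).1.hasDerivWithinAt)
      fun t ht => ?_
    have ht : T₀ ≤ t := interior_subset ht
    have hSI := hnonneg t (le_sup_right.trans ht)
    exact reducedRhsS_nonneg hSI.1 hSI.2 (hT t (le_sup_left.trans ht)).1
      (hT t (le_sup_left.trans ht)).2
  exact ⟨T₀, fun t ht => le_antisymm (hmono.le_of_tendsto_atTop hSlim ht)
    (hnonneg t (le_sup_right.trans ht)).1⟩

theorem IsSol.S_eq_zero_of_forall_ge (hsol : IsSol r m β γ μ cSS cSI cIS cII a S I)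
    (hnonneg : ∀ t, 0 ≤ t → 0 ≤ S t ∧ 0 ≤ I t) (hrm : m ≤ r) (hinf : 0 ≤ a * r + γ) {T : ℝ}
    (hT : ∀ t ≥ T, S t = 0) {t : ℝ} (ht : 0 ≤ t) : S t = 0 := by
  have hSc : ContinuousOn S (Ici 0) := fun t ht => (hsol t ht).1.continuousAt.continuousWithinAt
  have hIc : ContinuousOn I (Ici 0) := fun t ht => (hsol t ht).2.continuousAt.continuousWithinAt
  have hc : ContinuousOn (fun t => -(cSS * S t + cSI * I t + β * I t)) (Ici 0) := by fun_prop
  exact eq_zero_of_mul_le_deriv_of_eq_zero (le_max_right T t)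
    (fun u hu => (hsol u (ht.trans hu.1)).1) (hc.mono fun u hu => ht.trans hu.1)
    (fun u hu => neg_mul_le_reducedRhsS (hnonneg u (ht.trans hu.1)).1
      (hnonneg u (ht.trans hu.1)).2 hrm hinf)
    (fun u hu => (hnonneg u (ht.trans hu.1)).1) (hT _ (le_max_left T t))

theorem IsSol.I_eq_zero_of_S_eq_zero (hsol : IsSol r m β γ μ cSS cSI cIS cII a S I)
    (hinf : 0 < a * r + γ) (hS : ∀ t, 0 ≤ t → S t = 0) {t : ℝ} (ht : 0 ≤ t) : I t = 0 := by
  have hrhs := (hsol t ht).1.eq_zero_of_eqOn_Ici ht hS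
  rw [hS t ht, ← reducedRhsS, reducedRhsS_zero_left] at hrhs
  exact (mul_eq_zero.1 hrhs).resolve_left hinf.ne'

end ReducedSystem

/-- If `r > m`, the only nonnegative solution tending to the origin
is the identically zero one. -/
theorem only_zero_solution_tends_to_origin
    (r m β γ μ cSS cSI cIS cII a : ℝ)
    (hp : ParamsPos r m β γ μ cSS cSI cIS cII a)
    (hrm : m < r)
    (S I : ℝ → ℝ) (hsol : IsSol r m β γ μ cSS cSI cIS cII a S I)
    (hnonneg : ∀ t : ℝ, 0 ≤ t → 0 ≤ S t ∧ 0 ≤ I t)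
    (hlim : Tendsto (fun t => (S t, I t)) atTop (𝓝 ((0 : ℝ), (0 : ℝ)))) :
    ∀ t : ℝ, 0 ≤ t → S t = 0 ∧ I t = 0 := by
  obtain ⟨-, hm, -, hγ, -, -, -, -, -, ha, -⟩ := hp
  have hinf : 0 < a * r + γ := by nlinarith
  obtain ⟨T, hT⟩ :=
    hsol.exists_forall_ge_S_eq_zero hnonneg hrm hinf hlim.fst_nhds hlim.snd_nhds
  have hS : ∀ t, 0 ≤ t → S t = 0 := fun t =>
    hsol.S_eq_zero_of_forall_ge hnonneg hrm.le hinf.le hT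
  exact fun t ht => ⟨hS t ht, hsol.I_eq_zero_of_S_eq_zero hinf hS ht⟩
end

section
/- (Proposition 3, part 2) Assume r > m and set S1 = (r − m)/cSS. If S1·(β − cIS) < m + γ + μ, then the disease-free equilibrium (S1, 0) is locally asymptotically stable: for every ε > 0 there exists δ > 0 such that every solution of the reduced system with nonnegative initial conditions within distance δ of (S1, 0) remains within distance ε of (S1, 0) for all t ≥ 0, and there exists δ₀ > 0 such that every such solution starting within distance δ₀ of (S1, 0) converges to (S1, 0) as t → ∞. -/
open Filter Topology

/-!
Write `S = s₁ + u` around the disease-free equilibrium `(s₁, 0)`, `s₁ = (r - m) / cSS`. Then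
`S' = -cSS (s₁ + u) u + G(u) I` and `I' = (-c₀ + (β - cIS) u - cII I) I` with
`c₀ = m + γ + μ - s₁ (β - cIS) > 0`. For `V = u² + K I` and `|u| ≤ ρ` small, the logistic term
gives `2 u S' ≤ -cSS s₁ u² + 2 ρ M I` with `M` a bound for `|G|`, and `I' ≤ -(c₀ / 2) I`; taking
`K c₀ / 2 = 2 ρ M + 1` yields `V' ≤ -k V` on the sublevel set `V ≤ ρ²`, where `|u| ≤ ρ` because
`I` stays nonnegative (`I' = φ I`). Comparing with an exponential barrier, `V t ≤ c e^{-k t / 2}`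
for solutions starting with `V ≤ c ≤ ρ²`, and `V` controls the distance to `(s₁, 0)`.
-/

open Real Set

theorem hasDerivAt_const_mul_exp_mul (c κ x : ℝ) :
    HasDerivAt (fun x => c * exp (κ * x)) (κ * (c * exp (κ * x))) x :=
  ((((hasDerivAt_id x).const_mul κ).exp).const_mul c).congr_deriv (by simp only [id]; ring)

theorem le_mul_exp_of_hasDerivAt_le_neg_mul {V V' : ℝ → ℝ} {η c k k' : ℝ}
    (hV : ∀ t, 0 ≤ t → HasDerivAt V (V' t) t)
    (hdecay : ∀ t, 0 ≤ t → V t ≤ η → V' t ≤ -k * V t)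
    (hk' : 0 ≤ k') (hk'k : k' < k) (hc : 0 < c) (hcη : c ≤ η) (h0 : V 0 ≤ c)
    {t : ℝ} (ht : 0 ≤ t) : V t ≤ c * exp (-k' * t) := by
  refine image_le_of_deriv_right_lt_deriv_boundary
    (fun x hx => (hV x hx.1).continuousAt.continuousWithinAt)
    (fun x hx => (hV x hx.1).hasDerivWithinAt) (by simpa using h0)
    (hasDerivAt_const_mul_exp_mul c (-k')) ?_ ⟨ht, le_rfl⟩
  intro x hx hVx
  have hBpos : 0 < c * exp (-k' * x) := by positivity
  have hBle : c * exp (-k' * x) ≤ c :=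
    mul_le_of_le_one_right hc.le (exp_le_one_iff.2 (by nlinarith [hx.1]))
  calc V' x ≤ -k * V x := hdecay x hx.1 (by linarith)
    _ < -k' * (c * exp (-k' * x)) := by rw [hVx]; nlinarith

theorem nonneg_of_hasDerivAt_eq_mul {f φ : ℝ → ℝ} (hf : ∀ t, 0 ≤ t → HasDerivAt f (φ t * f t) t)
    (hφ : ContinuousOn φ (Ici 0)) (h0 : 0 ≤ f 0) {T : ℝ} (hT : 0 ≤ T) : 0 ≤ f T := by
  obtain ⟨C, hC⟩ : BddAbove (φ '' Icc 0 T) :=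
    (isCompact_Icc.image_of_continuousOn (hφ.mono Icc_subset_Ici_self)).bddAbove
  -- `-f` cannot catch up with `ε e^{(C + 1) t}`: where they meet, `-f` grows at rate `≤ C`.
  have hbarrier : ∀ ε, 0 < ε → -f T ≤ ε * exp ((C + 1) * T) := by
    intro ε hε
    refine image_le_of_deriv_right_lt_deriv_boundary (f := fun t => -f t)
      (fun x hx => (hf x hx.1).continuousAt.neg.continuousWithinAt)
      (fun x hx => (hf x hx.1).neg.hasDerivWithinAt) (by simp; linarith)
      (hasDerivAt_const_mul_exp_mul ε (C + 1)) ?_ ⟨hT, le_rfl⟩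
    intro x hx hfx
    have hφx : φ x ≤ C := hC ⟨x, Ico_subset_Icc_self hx, rfl⟩
    have hBpos : 0 < ε * exp ((C + 1) * x) := by positivity
    calc -(φ x * f x) = φ x * (ε * exp ((C + 1) * x)) := by rw [← hfx]; ring
      _ < (C + 1) * (ε * exp ((C + 1) * x)) := by nlinarith
  by_contra hneg
  have hE : 0 < exp ((C + 1) * T) := exp_pos _
  have := hbarrier (-f T / (2 * exp ((C + 1) * T))) (div_pos (by linarith) (by positivity))
  rw [div_mul_eq_mul_div, mul_div_mul_right _ _ hE.ne'] at this
  linarith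

-- `IsSol` says, definitionally, `S' = driftS … (S t) (I t)` and `I' = driftI … (S t) (I t)`.
def driftS (r m β γ cSS cSI a : ℝ) (s i : ℝ) : ℝ :=
  r * s + a * r * i - m * s - (cSS * s + cSI * i) * s - β * s * i + γ * i

def driftI (m β γ μ cIS cII : ℝ) (s i : ℝ) : ℝ :=
  -(m * i) - (cIS * s + cII * i) * i + β * s * i - γ * i - μ * i

def lyap (K s₁ : ℝ) (p : ℝ × ℝ) : ℝ := (p.1 - s₁) ^ 2 + K * p.2

theorem dist_lt_of_lyap_lt {K s₁ ε : ℝ} (hK : 0 < K) {p : ℝ × ℝ} (hp : 0 ≤ p.2)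
    (h : lyap K s₁ p < min (ε ^ 2) (K * ε)) : dist p (s₁, 0) < ε := by
  unfold lyap at h
  have h₁ := h.trans_le (min_le_left _ _)
  have h₂ := h.trans_le (min_le_right _ _)
  have hε : 0 < ε := pos_of_mul_pos_right (by nlinarith [sq_nonneg (p.1 - s₁)]) hK.le
  rw [Prod.dist_eq, max_lt_iff, Real.dist_eq, Real.dist_eq, sub_zero, abs_of_nonneg hp]
  exact ⟨abs_lt_of_sq_lt_sq (by nlinarith) hε.le,
    lt_of_mul_lt_mul_left (by nlinarith [sq_nonneg (p.1 - s₁)]) hK.le⟩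

theorem exists_forall_dist_lt_lyap_lt (K s₁ : ℝ) {c : ℝ} (hc : 0 < c) :
    ∃ δ, 0 < δ ∧ ∀ p, dist p (s₁, 0) < δ → lyap K s₁ p < c := by
  have hcont : Continuous (lyap K s₁) := by unfold lyap; fun_prop
  obtain ⟨δ, hδ, h⟩ := Metric.eventually_nhds_iff.1
    (hcont.continuousAt.eventually_lt continuousAt_const
      (show lyap K s₁ (s₁, 0) < c by simpa [lyap] using hc))
  exact ⟨δ, hδ, fun p hp => h hp⟩

theorem tendsto_of_lyap_le_mul_exp {K s₁ c k : ℝ} (hK : 0 < K) (hk : 0 < k) {x : ℝ → ℝ × ℝ}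
    (hx : ∀ t, 0 ≤ t → 0 ≤ (x t).2) (hV : ∀ t, 0 ≤ t → lyap K s₁ (x t) ≤ c * exp (-k * t)) :
    Tendsto x atTop (𝓝 (s₁, 0)) := by
  have hexp : Tendsto (fun t => c * exp (-k * t)) atTop (𝓝 0) := by
    simpa using (tendsto_exp_atBot.comp
      (tendsto_id.const_mul_atTop_of_neg (neg_neg_of_pos hk))).const_mul c
  have hV₀ : Tendsto (fun t => lyap K s₁ (x t)) atTop (𝓝 0) := by
    refine squeeze_zero' ?_ ?_ hexp <;> filter_upwards [eventually_ge_atTop 0] with t ht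
    · exact add_nonneg (sq_nonneg _) (mul_nonneg hK.le (hx t ht))
    · exact hV t ht
  refine Metric.tendsto_nhds.2 fun ε hε => ?_
  filter_upwards [hV₀.eventually (gt_mem_nhds (show (0 : ℝ) < min (ε ^ 2) (K * ε) by positivity)),
    eventually_ge_atTop 0] with t hlt ht
  exact dist_lt_of_lyap_lt hK (hx t ht) hlt

section ReducedSystem

variable {r m β γ μ cSS cSI cIS cII a : ℝ}

theorem driftS_add_eq {s₁ : ℝ} (heq : cSS * s₁ = r - m) (u i : ℝ) :
    driftS r m β γ cSS cSI a (s₁ + u) i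
      = -cSS * (s₁ + u) * u + (a * r + γ - (cSI + β) * (s₁ + u)) * i := by
  unfold driftS; rw [show r = m + cSS * s₁ by linarith]; ring

theorem driftI_eq_mul (s i : ℝ) :
    driftI m β γ μ cIS cII s i = (β * s - cIS * s - cII * i - (m + γ + μ)) * i := by
  unfold driftI; ring

theorem exists_lyap_estimate {s₁ : ℝ} (hcSS : 0 < cSS) (hcII : 0 ≤ cII) (hs₁ : 0 < s₁)
    (heq : cSS * s₁ = r - m) (hs : s₁ * (β - cIS) < m + γ + μ) :
    ∃ K k ρ : ℝ, 0 < K ∧ 0 < k ∧ 0 < ρ ∧ ∀ u i : ℝ, |u| ≤ ρ → 0 ≤ i →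
      2 * u * driftS r m β γ cSS cSI a (s₁ + u) i + K * driftI m β γ μ cIS cII (s₁ + u) i
        ≤ -k * (u ^ 2 + K * i) := by
  set c₀ := m + γ + μ - s₁ * (β - cIS)
  have hc₀ : 0 < c₀ := by linarith
  set ρ := min (s₁ / 2) (c₀ / (2 * (|β - cIS| + 1)))
  have hρ : 0 < ρ := lt_min (by linarith) (by positivity)
  have hρs₁ : ρ ≤ s₁ / 2 := min_le_left _ _
  have hρc₀ : ρ * |β - cIS| ≤ c₀ / 2 := by
    have h := min_le_right (s₁ / 2) (c₀ / (2 * (|β - cIS| + 1)))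
    rw [le_div_iff₀ (by positivity)] at h
    linarith
  set M := |a * r + γ| + |cSI + β| * (s₁ + ρ)
  set K := 2 * (2 * ρ * M + 1) / c₀
  have hK : 0 < K := by positivity
  have hKc₀ : K * c₀ = 2 * (2 * ρ * M + 1) := div_mul_cancel₀ _ hc₀.ne'
  set k := min (cSS * s₁) (1 / K)
  have hk₁ : k ≤ cSS * s₁ := min_le_left _ _
  have hk₂ : k * K ≤ 1 := by
    have := min_le_right (cSS * s₁) (1 / K); rwa [le_div_iff₀ hK] at this
  refine ⟨K, k, ρ, hK, lt_min (by positivity) (by positivity), hρ, fun u i hu hi => ?_⟩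
  obtain ⟨hu₁, hu₂⟩ := abs_le.1 hu
  set G := a * r + γ - (cSI + β) * (s₁ + u)
  have hI : driftI m β γ μ cIS cII (s₁ + u) i = (-c₀ + (β - cIS) * u - cII * i) * i := by
    rw [driftI_eq_mul]; ring
  have hlogistic : 2 * u * (-cSS * (s₁ + u) * u) ≤ -(cSS * s₁) * u ^ 2 := by
    nlinarith [mul_nonneg (mul_nonneg hcSS.le (sq_nonneg u)) (by linarith : 0 ≤ s₁ + 2 * u)]
  have hG : |G| ≤ M :=
    calc |G| ≤ |a * r + γ| + |cSI + β| * |s₁ + u| := by rw [← abs_mul]; exact abs_sub _ _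
      _ ≤ M := add_le_add le_rfl (mul_le_mul_of_nonneg_left
            (abs_le.2 ⟨by linarith, by linarith⟩) (abs_nonneg _))
  have huG : u * G ≤ ρ * M :=
    (le_abs_self _).trans (by rw [abs_mul]; exact mul_le_mul hu hG (abs_nonneg _) hρ.le)
  have hu_rate : (β - cIS) * u ≤ ρ * |β - cIS| :=
    calc (β - cIS) * u ≤ |β - cIS| * |u| := by rw [← abs_mul]; exact le_abs_self _
      _ ≤ ρ * |β - cIS| := by rw [mul_comm]; exact mul_le_mul_of_nonneg_right hu (abs_nonneg _)
  have hrate : -c₀ + (β - cIS) * u - cII * i ≤ -(c₀ / 2) := by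
    linarith [mul_nonneg hcII hi]
  rw [driftS_add_eq heq, hI]
  linear_combination hlogistic + 2 * mul_le_mul_of_nonneg_right huG hi
    + mul_le_mul_of_nonneg_right hrate (mul_nonneg hK.le hi) - (i / 2) * hKc₀
    + mul_le_mul_of_nonneg_right hk₁ (sq_nonneg u) + mul_le_mul_of_nonneg_right hk₂ hi

variable {S I : ℝ → ℝ}

theorem IsSol.I_nonneg_s8 (hsol : IsSol r m β γ μ cSS cSI cIS cII a S I) (hI0 : 0 ≤ I 0)
    {t : ℝ} (ht : 0 ≤ t) : 0 ≤ I t := by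
  refine nonneg_of_hasDerivAt_eq_mul (φ := fun t => β * S t - cIS * S t - cII * I t - (m + γ + μ))
    (fun t ht => (hsol t ht).2.congr_deriv (driftI_eq_mul _ _)) (fun t ht => ?_) hI0 ht
  have hS := (hsol t ht).1.continuousAt
  have hI := (hsol t ht).2.continuousAt
  exact ContinuousAt.continuousWithinAt (by fun_prop)

theorem IsSol.hasDerivAt_lyap (hsol : IsSol r m β γ μ cSS cSI cIS cII a S I) (K s₁ : ℝ)
    {t : ℝ} (ht : 0 ≤ t) :
    HasDerivAt (fun t => lyap K s₁ (S t, I t)) (2 * (S t - s₁) * driftS r m β γ cSS cSI a (S t) (I t)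
      + K * driftI m β γ μ cIS cII (S t) (I t)) t := by
  refine ((((hsol t ht).1.sub_const s₁).pow 2).add ((hsol t ht).2.const_mul K)).congr_deriv ?_
  unfold driftS driftI
  push_cast
  ring

theorem exists_lyap_decay {s₁ : ℝ} (hcSS : 0 < cSS) (hcII : 0 ≤ cII) (hs₁ : 0 < s₁)
    (heq : cSS * s₁ = r - m) (hs : s₁ * (β - cIS) < m + γ + μ) :
    ∃ K k η : ℝ, 0 < K ∧ 0 < k ∧ 0 < η ∧ ∀ S I, IsSol r m β γ μ cSS cSI cIS cII a S I →
      0 ≤ I 0 → ∀ c, 0 < c → c ≤ η → lyap K s₁ (S 0, I 0) ≤ c →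
        ∀ t, 0 ≤ t → lyap K s₁ (S t, I t) ≤ c * exp (-k * t) := by
  obtain ⟨K, k, ρ, hK, hk, hρ, hest⟩ := exists_lyap_estimate (a := a) (cSI := cSI) (μ := μ)
    hcSS hcII hs₁ heq hs
  refine ⟨K, k / 2, ρ ^ 2, hK, by positivity, by positivity, ?_⟩
  intro S I hsol hI0 c hc hcρ h0 t ht
  refine le_mul_exp_of_hasDerivAt_le_neg_mul (k := k) (fun t ht => hsol.hasDerivAt_lyap K s₁ ht)
    (fun t ht hV => ?_) (by positivity) (by linarith) hc hcρ h0 ht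
  have hu : |S t - s₁| ≤ ρ := by
    refine abs_le_of_sq_le_sq ?_ hρ.le
    have := mul_nonneg hK.le (hsol.I_nonneg_s8 hI0 ht)
    unfold lyap at hV
    linarith
  simpa only [lyap, add_sub_cancel] using hest (S t - s₁) (I t) hu (hsol.I_nonneg_s8 hI0 ht)

end ReducedSystem

/-- Proposition 3, part 2: if `S1·(β-cIS) < m+γ+μ` the disease-free equilibrium
`(S1, 0)` is locally asymptotically stable. -/
theorem prop3_part2_local_stability
    (r m β γ μ cSS cSI cIS cII a : ℝ)
    (hp : ParamsPos r m β γ μ cSS cSI cIS cII a)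
    (hrm : m < r)
    (hs : ((r - m) / cSS) * (β - cIS) < m + γ + μ) :
    (∀ ε : ℝ, 0 < ε → ∃ δ : ℝ, 0 < δ ∧
      ∀ S I : ℝ → ℝ, IsSol r m β γ μ cSS cSI cIS cII a S I →
        0 ≤ S 0 → 0 ≤ I 0 →
        dist ((S 0, I 0) : ℝ × ℝ) ((r - m) / cSS, 0) < δ →
        ∀ t : ℝ, 0 ≤ t → dist ((S t, I t) : ℝ × ℝ) ((r - m) / cSS, 0) < ε) ∧
    (∃ δ₀ : ℝ, 0 < δ₀ ∧
      ∀ S I : ℝ → ℝ, IsSol r m β γ μ cSS cSI cIS cII a S I →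
        0 ≤ S 0 → 0 ≤ I 0 →
        dist ((S 0, I 0) : ℝ × ℝ) ((r - m) / cSS, 0) < δ₀ →
        Tendsto (fun t => (S t, I t)) atTop (𝓝 (((r - m) / cSS, 0) : ℝ × ℝ))) := by
  obtain ⟨-, -, -, -, -, hcSS, -, -, hcII, -, -⟩ := hp
  set s₁ := (r - m) / cSS
  obtain ⟨K, k, η, hK, hk, hη, hdecay⟩ := exists_lyap_decay (a := a) (cSI := cSI)
    hcSS hcII.le (div_pos (sub_pos.2 hrm) hcSS) (mul_div_cancel₀ _ hcSS.ne') hs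
  constructor
  · intro ε hε
    set c := min η (min (ε ^ 2) (K * ε) / 2)
    have hc : 0 < c := by positivity
    have hcε : c < min (ε ^ 2) (K * ε) :=
      (min_le_right _ _).trans_lt (half_lt_self (by positivity))
    obtain ⟨δ, hδ, hlt⟩ := exists_forall_dist_lt_lyap_lt K s₁ hc
    refine ⟨δ, hδ, fun S I hsol _ hI0 hd t ht => dist_lt_of_lyap_lt hK (hsol.I_nonneg_s8 hI0 ht) ?_⟩
    calc lyap K s₁ (S t, I t) ≤ c * exp (-k * t) :=
          hdecay S I hsol hI0 c hc (min_le_left _ _) (hlt _ hd).le t ht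
      _ ≤ c := mul_le_of_le_one_right hc.le (exp_le_one_iff.2 (by nlinarith))
      _ < min (ε ^ 2) (K * ε) := hcε
  · obtain ⟨δ, hδ, hlt⟩ := exists_forall_dist_lt_lyap_lt K s₁ hη
    exact ⟨δ, hδ, fun S I hsol _ hI0 hd => tendsto_of_lyap_le_mul_exp hK hk
      (fun t ht => hsol.I_nonneg_s8 hI0 ht) (hdecay S I hsol hI0 η hη le_rfl (hlt _ hd).le)⟩
end

section
/- (Proposition 4) Assume r > m and β > cIS, and set S1 = (r − m)/cSS, A = (m + γ + μ)/(β − cIS), B = (a·r + γ)/(cSI + β). If A ≥ max{S1, B}, then (S1, 0) is the unique equilibrium of the reduced system in the closed positive quadrant other than the origin, and every solution with S(0) > 0 and I(0) > 0 converges to (S1, 0) as t → ∞. -/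
open Filter Topology

namespace Prop4Aux

open Set

lemma contOn {f f' : ℝ → ℝ} {t0 : ℝ} (hf : ∀ t, t0 ≤ t → HasDerivAt f (f' t) t)
    {s : Set ℝ} (hs : s ⊆ Ici t0) : ContinuousOn f s :=
  fun x hx => ((hf x (hs hx)).continuousAt).continuousWithinAt

lemma stay_le {f f' : ℝ → ℝ} {t0 L : ℝ}
    (hf : ∀ t, t0 ≤ t → HasDerivAt f (f' t) t)
    (hd : ∀ t, t0 ≤ t → L ≤ f t → f' t ≤ 0)
    {t1 : ℝ} (ht1 : t0 ≤ t1) (hft1 : f t1 ≤ L) :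
    ∀ t, t1 ≤ t → f t ≤ L := by
  intro t2 ht2
  by_contra hcon
  push_neg at hcon
  have ht12 : t1 < t2 := lt_of_le_of_ne ht2 (by rintro rfl; linarith)
  have hcont : ContinuousOn f (Icc t1 t2) :=
    contOn hf (fun x hx => le_trans ht1 hx.1)
  have hEclosed : IsClosed (Icc t1 t2 ∩ f ⁻¹' Iic L) :=
    hcont.preimage_isClosed_of_isClosed isClosed_Icc isClosed_Iic
  set E := Icc t1 t2 ∩ f ⁻¹' Iic L with hE
  have hne : E.Nonempty := ⟨t1, ⟨le_rfl, le_of_lt ht12⟩, hft1⟩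
  have hbdd : BddAbove E := ⟨t2, fun u hu => hu.1.2⟩
  set s := sSup E with hs
  have hsE : s ∈ E := hEclosed.csSup_mem hne hbdd
  have hst0 : t0 ≤ s := le_trans ht1 hsE.1.1
  have hfs : f s ≤ L := hsE.2
  have hslt : s < t2 := lt_of_le_of_ne hsE.1.2 (fun h => by rw [h] at hfs; linarith)
  have hgt : ∀ x ∈ Ioo s t2, L < f x := by
    intro x hx
    by_contra hfx
    push_neg at hfx
    have : x ∈ E := ⟨⟨le_trans hsE.1.1 hx.1.le, hx.2.le⟩, hfx⟩
    exact absurd (le_csSup hbdd this) (not_le.mpr hx.1)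
  have hanti : AntitoneOn f (Icc s t2) := by
    apply antitoneOn_of_deriv_nonpos (convex_Icc s t2)
      (hcont.mono (Icc_subset_Icc hsE.1.1 le_rfl))
    · intro x hx
      rw [interior_Icc] at hx
      exact ((hf x (le_trans hst0 hx.1.le)).differentiableAt).differentiableWithinAt
    · intro x hx
      rw [interior_Icc] at hx
      rw [(hf x (le_trans hst0 hx.1.le)).deriv]
      exact hd x (le_trans hst0 hx.1.le) (hgt x hx).le
  have h6 : f t2 ≤ f s := hanti ⟨le_rfl, hslt.le⟩ ⟨hslt.le, le_rfl⟩ hslt.le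
  have h7 : f s ≤ L := hsE.2
  linarith

lemma stay_ge {f f' : ℝ → ℝ} {t0 L : ℝ}
    (hf : ∀ t, t0 ≤ t → HasDerivAt f (f' t) t)
    (hd : ∀ t, t0 ≤ t → f t ≤ L → 0 ≤ f' t)
    {t1 : ℝ} (ht1 : t0 ≤ t1) (hft1 : L ≤ f t1) :
    ∀ t, t1 ≤ t → L ≤ f t := by
  intro t ht
  have h := stay_le (f := fun u => -f u) (f' := fun u => -f' u) (L := -L)
    (fun u hu => (hf u hu).neg)
    (fun u hu hle => by
      have : f u ≤ L := by linarith [neg_le_neg_iff.mp hle]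
      simpa using hd u hu this)
    ht1 (by simpa using hft1) t ht
  simpa using h

lemma eventually_le {f f' : ℝ → ℝ} {t0 L c : ℝ} (hc : 0 < c)
    (hf : ∀ t, t0 ≤ t → HasDerivAt f (f' t) t)
    (hd : ∀ t, t0 ≤ t → L ≤ f t → f' t ≤ -c) :
    ∃ T, t0 ≤ T ∧ ∀ t, T ≤ t → f t ≤ L := by
  have hd0 : ∀ t, t0 ≤ t → L ≤ f t → f' t ≤ 0 := fun t ht hL =>
    le_trans (hd t ht hL) (by linarith)
  by_cases hex : ∃ t1, t0 ≤ t1 ∧ f t1 ≤ L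
  · obtain ⟨t1, ht1, hft1⟩ := hex
    exact ⟨t1, ht1, stay_le hf hd0 ht1 hft1⟩
  · exfalso
    push_neg at hex
    have hgt : ∀ t, t0 ≤ t → L < f t := fun t ht => hex t ht
    have hanti : AntitoneOn (fun t => f t + c * t) (Ici t0) := by
      apply antitoneOn_of_deriv_nonpos (convex_Ici t0)
        (by
          apply ContinuousOn.add (contOn hf Subset.rfl)
          exact (continuous_const.mul continuous_id).continuousOn)
      · intro x hx
        rw [interior_Ici] at hx
        exact (((hf x hx.le).add ((hasDerivAt_id x).const_mul c)).differentiableAt).differentiableWithinAt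
      · intro x hx
        rw [interior_Ici] at hx
        have hder : HasDerivAt (fun t => f t + c * t) (f' x + c * 1) x :=
          (hf x hx.le).add ((hasDerivAt_id x).const_mul c)
        rw [hder.deriv]
        have := hd x hx.le (hgt x hx.le).le
        linarith
    have h1 : 0 < (f t0 - L) / c := div_pos (by linarith [hgt t0 le_rfl]) hc
    have hT0 : t0 ≤ t0 + (f t0 - L) / c + 1 := by linarith
    have h5 := hanti (mem_Ici.mpr le_rfl) (mem_Ici.mpr hT0) hT0
    simp only at h5
    have h3 : c * (t0 + (f t0 - L) / c + 1) = c * t0 + (f t0 - L) + c := by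
      field_simp
    linarith [hgt (t0 + (f t0 - L) / c + 1) hT0]

lemma eventually_ge {f f' : ℝ → ℝ} {t0 L c : ℝ} (hc : 0 < c)
    (hf : ∀ t, t0 ≤ t → HasDerivAt f (f' t) t)
    (hd : ∀ t, t0 ≤ t → f t ≤ L → c ≤ f' t) :
    ∃ T, t0 ≤ T ∧ ∀ t, T ≤ t → L ≤ f t := by
  obtain ⟨T, hT0, hT⟩ := eventually_le (f := fun u => -f u) (f' := fun u => -f' u)
    (L := -L) hc (fun u hu => (hf u hu).neg)
    (fun u hu hle => by
      have : f u ≤ L := by linarith [neg_le_neg_iff.mp hle]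
      have := hd u hu this; simp; linarith)
  exact ⟨T, hT0, fun t ht => by linarith [hT t ht]⟩

lemma pos_at {f f' : ℝ → ℝ} {t0 t2 : ℝ} (h02 : t0 ≤ t2)
    (hf : ∀ t ∈ Icc t0 t2, HasDerivAt f (f' t) t)
    (hd : ∀ t ∈ Icc t0 t2, 0 ≤ f t → 0 ≤ f' t)
    (h0 : 0 < f t0) : 0 < f t2 := by
  by_contra hcon
  push_neg at hcon
  have hcont : ContinuousOn f (Icc t0 t2) := fun x hx =>
    ((hf x hx).continuousAt).continuousWithinAt
  have hEclosed : IsClosed (Icc t0 t2 ∩ f ⁻¹' Iic 0) :=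
    hcont.preimage_isClosed_of_isClosed isClosed_Icc isClosed_Iic
  set E := Icc t0 t2 ∩ f ⁻¹' Iic 0 with hE
  have hne : E.Nonempty := ⟨t2, ⟨h02, le_rfl⟩, hcon⟩
  have hbdd : BddBelow E := ⟨t0, fun u hu => hu.1.1⟩
  set s := sInf E with hs
  have hsE : s ∈ E := hEclosed.csInf_mem hne hbdd
  have hfs : f s ≤ 0 := hsE.2
  have hlt : t0 < s := lt_of_le_of_ne hsE.1.1 (fun h => by rw [← h] at hfs; linarith)
  have hgt : ∀ x ∈ Ioo t0 s, 0 < f x := by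
    intro x hx
    by_contra hfx
    push_neg at hfx
    have : x ∈ E := ⟨⟨hx.1.le, le_trans hx.2.le hsE.1.2⟩, hfx⟩
    exact absurd (csInf_le hbdd this) (not_le.mpr hx.2)
  have hmono : MonotoneOn f (Icc t0 s) := by
    apply monotoneOn_of_deriv_nonneg (convex_Icc t0 s)
      (hcont.mono (Icc_subset_Icc le_rfl hsE.1.2))
    · intro x hx
      rw [interior_Icc] at hx
      have hxm : x ∈ Icc t0 t2 := ⟨hx.1.le, le_trans hx.2.le hsE.1.2⟩
      exact ((hf x hxm).differentiableAt).differentiableWithinAt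
    · intro x hx
      rw [interior_Icc] at hx
      have hxm : x ∈ Icc t0 t2 := ⟨hx.1.le, le_trans hx.2.le hsE.1.2⟩
      rw [(hf x hxm).deriv]
      exact hd x hxm (hgt x hx).le
  have h6 : f t0 ≤ f s := hmono ⟨le_rfl, hlt.le⟩ ⟨hlt.le, le_rfl⟩ hlt.le
  have h7 : f s ≤ 0 := hsE.2
  linarith

/-- Both components of a positive solution stay positive. -/
lemma sol_pos {r m β γ μ cSS cSI cIS cII a : ℝ}
    (hr : 0 < r) (hγ : 0 < γ) (ha0 : 0 < a) {S I : ℝ → ℝ}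
    (hsol : IsSol r m β γ μ cSS cSI cIS cII a S I)
    (hS0 : 0 < S 0) (hI0 : 0 < I 0) :
    ∀ t, 0 ≤ t → 0 < S t ∧ 0 < I t := by
  have hfS : ∀ t, 0 ≤ t → HasDerivAt S (r * S t + a * r * I t - m * S t
      - (cSS * S t + cSI * I t) * S t - β * S t * I t + γ * I t) t :=
    fun t ht => (hsol t ht).1
  have hfI : ∀ t, 0 ≤ t → HasDerivAt I (-(m * I t) - (cIS * S t + cII * I t) * I t
      + β * S t * I t - γ * I t - μ * I t) t := fun t ht => (hsol t ht).2
  have hScont : ContinuousOn S (Ici (0:ℝ)) := contOn hfS Subset.rfl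
  have hIcont : ContinuousOn I (Ici (0:ℝ)) := contOn hfI Subset.rfl
  -- positivity of I
  have hIpos : ∀ t, 0 ≤ t → 0 < I t := by
    intro t2 ht2
    set g : ℝ → ℝ := fun u => (β - cIS) * S u - cII * I u - (m + γ + μ) with hg
    have hgc : ContinuousOn g (Icc 0 t2) := by
      apply ContinuousOn.sub
      apply ContinuousOn.sub
      · exact (continuousOn_const.mul (hScont.mono Icc_subset_Ici_self))
      · exact (continuousOn_const.mul (hIcont.mono Icc_subset_Ici_self))
      · exact continuousOn_const
    obtain ⟨K, hK⟩ := isCompact_Icc.exists_bound_of_continuousOn hgc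
    have key : 0 < I t2 * Real.exp (K * t2) := by
      apply pos_at (f := fun u => I u * Real.exp (K * u))
        (f' := fun u => (-(m * I u) - (cIS * S u + cII * I u) * I u
          + β * S u * I u - γ * I u - μ * I u) * Real.exp (K * u)
          + I u * (Real.exp (K * u) * (K * 1))) ht2
      · intro u hu
        exact (hfI u hu.1).mul (((hasDerivAt_id u).const_mul K).exp)
      · intro u hu hnn
        have he : (0:ℝ) < Real.exp (K * u) := Real.exp_pos _
        have hIu : 0 ≤ I u := by nlinarith
        have hgb : -K ≤ g u := by
          have := hK u hu
          rw [Real.norm_eq_abs] at this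
          linarith [abs_le.mp this]
        have hrw : (-(m * I u) - (cIS * S u + cII * I u) * I u
            + β * S u * I u - γ * I u - μ * I u) * Real.exp (K * u)
            + I u * (Real.exp (K * u) * (K * 1))
            = I u * (g u + K) * Real.exp (K * u) := by
          simp only [hg]; ring
        rw [hrw]
        have : 0 ≤ g u + K := by linarith
        positivity
      · simpa using hI0
    have he : (0:ℝ) < Real.exp (K * t2) := Real.exp_pos _
    nlinarith
  -- positivity of S
  intro t2 ht2
  refine ⟨?_, hIpos t2 ht2⟩
  set h : ℝ → ℝ := fun u => r - m - cSS * S u - cSI * I u - β * I u with hh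
  have hhc : ContinuousOn h (Icc 0 t2) := by
    apply ContinuousOn.sub
    apply ContinuousOn.sub
    apply ContinuousOn.sub
    · exact continuousOn_const
    · exact (continuousOn_const.mul (hScont.mono Icc_subset_Ici_self))
    · exact (continuousOn_const.mul (hIcont.mono Icc_subset_Ici_self))
    · exact (continuousOn_const.mul (hIcont.mono Icc_subset_Ici_self))
  obtain ⟨K, hK⟩ := isCompact_Icc.exists_bound_of_continuousOn hhc
  have key : 0 < S t2 * Real.exp (K * t2) := by
    apply pos_at (f := fun u => S u * Real.exp (K * u))
      (f' := fun u => (r * S u + a * r * I u - m * S u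
        - (cSS * S u + cSI * I u) * S u - β * S u * I u + γ * I u) * Real.exp (K * u)
        + S u * (Real.exp (K * u) * (K * 1))) ht2
    · intro u hu
      exact (hfS u hu.1).mul (((hasDerivAt_id u).const_mul K).exp)
    · intro u hu hnn
      have he : (0:ℝ) < Real.exp (K * u) := Real.exp_pos _
      have hSu : 0 ≤ S u := by nlinarith
      have hhb : -K ≤ h u := by
        have := hK u hu
        rw [Real.norm_eq_abs] at this
        linarith [abs_le.mp this]
      have hIu : 0 < I u := hIpos u hu.1
      have hrw : (r * S u + a * r * I u - m * S u
          - (cSS * S u + cSI * I u) * S u - β * S u * I u + γ * I u) * Real.exp (K * u)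
          + S u * (Real.exp (K * u) * (K * 1))
          = (S u * (h u + K) + I u * (a * r + γ)) * Real.exp (K * u) := by
        simp only [hh]; ring
      rw [hrw]
      have h1 : 0 ≤ h u + K := by linarith
      have h2 : 0 < a * r + γ := by positivity
      have h3 : 0 ≤ S u * (h u + K) + I u * (a * r + γ) := by positivity
      positivity
    · simpa using hS0
  have he : (0:ℝ) < Real.exp (K * t2) := Real.exp_pos _
  nlinarith

lemma quad_bound {c s1 p e x : ℝ} (hc : 0 < c) (hp : 0 < p) (he : 0 < e)
    (h1 : s1 + e ≤ x) (h2 : p ≤ x) : x * (c * s1 - c * x) ≤ -(c * p * e) := by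
  nlinarith [mul_nonneg (mul_nonneg hc.le (sub_nonneg.2 h2)) (show (0:ℝ) ≤ x - s1 - e by linarith),
    mul_nonneg (mul_nonneg hc.le hp.le) (show (0:ℝ) ≤ x - s1 - e by linarith),
    mul_nonneg (mul_nonneg hc.le he.le) (sub_nonneg.2 h2)]

end Prop4Aux

open Prop4Aux

set_option maxHeartbeats 1000000 in
/-- Proposition 4: if `A ≥ max {S1, B}` then `(S1, 0)` is the only nonnegative
equilibrium besides the origin and it attracts every positive solution. -/
theorem prop4_disease_free_attracts
    (r m β γ μ cSS cSI cIS cII a : ℝ)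
    (hp : ParamsPos r m β γ μ cSS cSI cIS cII a)
    (hrm : m < r) (hβc : cIS < β)
    (hA : max ((r - m) / cSS) ((a * r + γ) / (cSI + β)) ≤ (m + γ + μ) / (β - cIS)) :
    IsEquilibrium r m β γ μ cSS cSI cIS cII a ((r - m) / cSS) 0 ∧
    (∀ s i : ℝ, 0 ≤ s → 0 ≤ i → IsEquilibrium r m β γ μ cSS cSI cIS cII a s i →
      (s = 0 ∧ i = 0) ∨ (s = (r - m) / cSS ∧ i = 0)) ∧
    (∀ S I : ℝ → ℝ, IsSol r m β γ μ cSS cSI cIS cII a S I →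
      0 < S 0 → 0 < I 0 →
      Tendsto (fun t => (S t, I t)) atTop (𝓝 (((r - m) / cSS, 0) : ℝ × ℝ))) := by
  obtain ⟨hr, hm, hβ, hγ, hμ, hcSS, hcSI, hcIS, hcII, ha0, ha1⟩ := hp
  have hβc' : 0 < β - cIS := by linarith
  have hcβ : 0 < cSI + β := by linarith
  have hrm' : 0 < r - m := by linarith
  obtain ⟨S1, hS1⟩ : ∃ x : ℝ, x = (r - m) / cSS := ⟨_, rfl⟩
  obtain ⟨A, hAdef⟩ : ∃ x : ℝ, x = (m + γ + μ) / (β - cIS) := ⟨_, rfl⟩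
  obtain ⟨B, hBdef⟩ : ∃ x : ℝ, x = (a * r + γ) / (cSI + β) := ⟨_, rfl⟩
  have hS1pos : 0 < S1 := by rw [hS1]; positivity
  have hApos : 0 < A := by rw [hAdef]; positivity
  have hBpos : 0 < B := by rw [hBdef]; positivity
  have hS1eq : cSS * S1 = r - m := by rw [hS1]; field_simp
  have hAeq : (β - cIS) * A = m + γ + μ := by rw [hAdef]; field_simp
  have hBeq : (cSI + β) * B = a * r + γ := by rw [hBdef]; field_simp
  have hS1A : S1 ≤ A := by
    rw [hS1, hAdef]; exact le_trans (le_max_left _ _) hA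
  have hBA : B ≤ A := by
    rw [hBdef, hAdef]; exact le_trans (le_max_right _ _) hA
  refine ⟨?_, ?_, ?_⟩
  · -- (S1, 0) is an equilibrium
    constructor
    · rw [← hS1]; nlinarith [hS1eq]
    · ring
  · -- uniqueness of nonnegative equilibria
    intro s i hs hi heq
    obtain ⟨h1, h2⟩ := heq
    rcases eq_or_lt_of_le hi with hi0 | hipos
    · -- i = 0
      have h1' : s * ((r - m) - cSS * s) = 0 := by
        rw [← hi0] at h1; linear_combination h1
      rcases mul_eq_zero.mp h1' with hs0 | hfac2
      · exact Or.inl ⟨hs0, hi0.symm⟩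
      · refine Or.inr ⟨?_, hi0.symm⟩
        rw [← hS1]
        nlinarith [hS1eq]
    · exfalso
      have h2' : i * ((β - cIS) * s - cII * i - (m + γ + μ)) = 0 := by linear_combination h2
      have hfac : (β - cIS) * s - cII * i - (m + γ + μ) = 0 := by
        rcases mul_eq_zero.mp h2' with hi0 | hfac
        · exact absurd hi0 (ne_of_gt hipos)
        · exact hfac
      have hsA : A < s := by nlinarith [hAeq]
      have e1 : r - m - cSS * s < 0 := by nlinarith [hS1eq]
      have e2 : a * r + γ - (cSI + β) * s < 0 := by nlinarith [hBeq]
      have hspos : 0 < s := lt_trans hApos hsA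
      have h1' : s * ((r - m) - cSS * s) + i * (a * r + γ - (cSI + β) * s) = 0 := by
        linear_combination h1
      nlinarith [mul_pos hspos (neg_pos.mpr e1), mul_pos hipos (neg_pos.mpr e2)]
  · -- convergence
    intro S I hsol hS0 hI0
    have hpos := sol_pos hr hγ ha0 hsol hS0 hI0
    have hfS : ∀ t, (0:ℝ) ≤ t → HasDerivAt S (r * S t + a * r * I t - m * S t
        - (cSS * S t + cSI * I t) * S t - β * S t * I t + γ * I t) t :=
      fun t ht => (hsol t ht).1
    have hfI : ∀ t, (0:ℝ) ≤ t → HasDerivAt I (-(m * I t) - (cIS * S t + cII * I t) * I t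
        + β * S t * I t - γ * I t - μ * I t) t := fun t ht => (hsol t ht).2
    obtain ⟨M, hMdef⟩ : ∃ x : ℝ, x = max S1 B := ⟨_, rfl⟩
    have hS1M : S1 ≤ M := hMdef ▸ le_max_left _ _
    have hBM : B ≤ M := hMdef ▸ le_max_right _ _
    have hMpos : 0 < M := lt_of_lt_of_le hS1pos hS1M
    have hMA : M ≤ A := hMdef ▸ max_le hS1A hBA
    -- Step A : eventually S t ≤ M + ε
    have stepA : ∀ ε : ℝ, 0 < ε → ∃ T, 0 ≤ T ∧ ∀ t, T ≤ t → S t ≤ M + ε := by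
      intro ε hε
      have hd : ∀ t, (0:ℝ) ≤ t → M + ε ≤ S t →
          r * S t + a * r * I t - m * S t
            - (cSS * S t + cSI * I t) * S t - β * S t * I t + γ * I t
            ≤ -(cSS * (M + ε) * ε) := by
        intro t ht hL
        have hIt := (hpos t ht).2
        have e1 : S t * (cSS * S1 - cSS * S t) ≤ -(cSS * (M + ε) * ε) :=
          quad_bound hcSS (by linarith) hε (by linarith) hL
        have e2 : I t * ((a * r + γ) - (cSI + β) * S t) ≤ 0 := by
          have hfac : (a * r + γ) - (cSI + β) * S t ≤ 0 := by
            nlinarith [hBeq, mul_nonneg hcβ.le (show (0:ℝ) ≤ S t - B by linarith)]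
          exact mul_nonpos_of_nonneg_of_nonpos hIt.le hfac
        have hid : r * S t + a * r * I t - m * S t
            - (cSS * S t + cSI * I t) * S t - β * S t * I t + γ * I t
            = S t * (cSS * S1 - cSS * S t) + I t * ((a * r + γ) - (cSI + β) * S t) := by
          linear_combination (-(S t)) * hS1eq
        rw [hid]
        linarith
      exact eventually_le (mul_pos (mul_pos hcSS (by linarith)) hε) hfS hd
    -- Step B : eventually I t ≤ η
    have stepB : ∀ η : ℝ, 0 < η → ∃ T, 0 ≤ T ∧ ∀ t, T ≤ t → I t ≤ η := by
      intro η hη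
      obtain ⟨T1, hT10, hSbd⟩ := stepA (cII * η / (2 * (β - cIS)))
        (div_pos (by positivity) (by linarith))
      have hd : ∀ t, T1 ≤ t → η ≤ I t →
          -(m * I t) - (cIS * S t + cII * I t) * I t
            + β * S t * I t - γ * I t - μ * I t ≤ -(cII * η ^ 2 / 2) := by
        intro t ht hL
        have ht0 : (0:ℝ) ≤ t := le_trans hT10 ht
        have hIt := (hpos t ht0).2
        have hSt := hSbd t ht
        have hεeq : (β - cIS) * (cII * η / (2 * (β - cIS))) = cII * η / 2 := by
          field_simp
        have hSA : (β - cIS) * S t ≤ (m + γ + μ) + cII * η / 2 := by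
          have h := mul_le_mul_of_nonneg_left
            (show S t ≤ A + cII * η / (2 * (β - cIS)) by linarith) hβc'.le
          rw [mul_add, hεeq] at h
          linarith [hAeq]
        have hg : (β - cIS) * S t - cII * I t - (m + γ + μ) ≤ -(cII * η / 2) := by
          have h := mul_le_mul_of_nonneg_left hL hcII.le
          linarith
        have hid : -(m * I t) - (cIS * S t + cII * I t) * I t
            + β * S t * I t - γ * I t - μ * I t
            = I t * ((β - cIS) * S t - cII * I t - (m + γ + μ)) := by ring
        rw [hid]
        have hb1 : I t * ((β - cIS) * S t - cII * I t - (m + γ + μ))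
            ≤ I t * -(cII * η / 2) := mul_le_mul_of_nonneg_left hg hIt.le
        have hb2 : I t * -(cII * η / 2) ≤ η * -(cII * η / 2) :=
          mul_le_mul_of_nonpos_right hL (by nlinarith)
        have hb3 : η * -(cII * η / 2) = -(cII * η ^ 2 / 2) := by ring
        linarith
      obtain ⟨T, hTT, hT⟩ :=
        eventually_le (by positivity) (fun t ht => hfI t (le_trans hT10 ht)) hd
      exact ⟨T, le_trans hT10 hTT, hT⟩
    -- Step C : S is eventually bounded below by a positive constant
    have stepC : ∃ δ : ℝ, 0 < δ ∧ ∃ T, 0 ≤ T ∧ ∀ t, T ≤ t → δ ≤ S t := by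
      obtain ⟨T2, hT20, hIbd⟩ := stepB ((r - m) / (2 * (cSI + β)))
        (div_pos hrm' (by linarith))
      refine ⟨min ((r - m) / (2 * cSS)) (S T2),
        lt_min (div_pos hrm' (by positivity)) (hpos T2 hT20).1,
        T2, hT20, ?_⟩
      have hd : ∀ t, T2 ≤ t → S t ≤ min ((r - m) / (2 * cSS)) (S T2) →
          0 ≤ r * S t + a * r * I t - m * S t
            - (cSS * S t + cSI * I t) * S t - β * S t * I t + γ * I t := by
        intro t ht hL
        have ht0 : (0:ℝ) ≤ t := le_trans hT20 ht
        have hSt := (hpos t ht0).1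
        have hIt := (hpos t ht0).2
        have hIb := hIbd t ht
        have heq1 : cSS * ((r - m) / (2 * cSS)) = (r - m) / 2 := by field_simp
        have h1 : cSS * S t ≤ (r - m) / 2 := by
          have h := mul_le_mul_of_nonneg_left
            (le_trans hL (min_le_left _ _)) hcSS.le
          linarith [heq1]
        have heq2 : (cSI + β) * ((r - m) / (2 * (cSI + β))) = (r - m) / 2 := by
          field_simp
        have h2 : (cSI + β) * I t ≤ (r - m) / 2 := by
          have h := mul_le_mul_of_nonneg_left hIb hcβ.le
          linarith [heq2]
        have hid : r * S t + a * r * I t - m * S t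
            - (cSS * S t + cSI * I t) * S t - β * S t * I t + γ * I t
            = S t * ((r - m) - cSS * S t - (cSI + β) * I t) + I t * (a * r + γ) := by ring
        rw [hid]
        have h3 : 0 ≤ (r - m) - cSS * S t - (cSI + β) * I t := by linarith
        have h4 : (0:ℝ) ≤ a * r + γ := by positivity
        exact add_nonneg (mul_nonneg hSt.le h3) (mul_nonneg hIt.le h4)
      exact stay_ge (fun t ht => hfS t (le_trans hT20 ht)) hd le_rfl (min_le_right _ _)
    -- Step D : eventually S t ≤ S1 + ε
    have stepD : ∀ ε : ℝ, 0 < ε → ∃ T, 0 ≤ T ∧ ∀ t, T ≤ t → S t ≤ S1 + ε := by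
      intro ε hε
      have harγ : (0:ℝ) < a * r + γ := by positivity
      obtain ⟨T3, hT30, hIbd⟩ := stepB (cSS * (S1 + ε) * ε / (2 * (a * r + γ)))
        (div_pos (mul_pos (mul_pos hcSS (by linarith)) hε) (by positivity))
      have hd : ∀ t, T3 ≤ t → S1 + ε ≤ S t →
          r * S t + a * r * I t - m * S t
            - (cSS * S t + cSI * I t) * S t - β * S t * I t + γ * I t
            ≤ -(cSS * (S1 + ε) * ε / 2) := by
        intro t ht hL
        have ht0 : (0:ℝ) ≤ t := le_trans hT30 ht
        have hSt := (hpos t ht0).1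
        have hIt := (hpos t ht0).2
        have hIb := hIbd t ht
        have e1 : S t * (cSS * S1 - cSS * S t) ≤ -(cSS * (S1 + ε) * ε) :=
          quad_bound hcSS (by linarith) hε hL (by linarith)
        have heq : cSS * (S1 + ε) * ε / (2 * (a * r + γ)) * (a * r + γ)
            = cSS * (S1 + ε) * ε / 2 := by field_simp
        have e2 : I t * (a * r + γ) ≤ cSS * (S1 + ε) * ε / 2 := by
          have h := mul_le_mul_of_nonneg_right hIb harγ.le
          linarith [heq]
        have e3 : 0 ≤ I t * ((cSI + β) * S t) :=
          mul_nonneg hIt.le (mul_nonneg hcβ.le hSt.le)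
        have hid : r * S t + a * r * I t - m * S t
            - (cSS * S t + cSI * I t) * S t - β * S t * I t + γ * I t
            = S t * (cSS * S1 - cSS * S t) + I t * (a * r + γ)
              - I t * ((cSI + β) * S t) := by
          linear_combination (-(S t)) * hS1eq
        rw [hid]
        linarith
      obtain ⟨T, hTT, hT⟩ :=
        eventually_le (div_pos (mul_pos (mul_pos hcSS (by linarith)) hε) (by norm_num))
          (fun t ht => hfS t (le_trans hT30 ht)) hd
      exact ⟨T, le_trans hT30 hTT, hT⟩
    -- Step E : eventually S1 - ε ≤ S t
    have stepE : ∀ ε : ℝ, 0 < ε → ∃ T, 0 ≤ T ∧ ∀ t, T ≤ t → S1 - ε ≤ S t := by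
      intro ε hε
      obtain ⟨δ, hδ, Tc, hTc0, hSlow⟩ := stepC
      obtain ⟨T4, hT40, hIbd⟩ := stepB (cSS * ε / (2 * (cSI + β)))
        (div_pos (by positivity) (by linarith))
      have hmax0 : (0:ℝ) ≤ max Tc T4 := le_trans hTc0 (le_max_left _ _)
      have hd : ∀ t, max Tc T4 ≤ t → S t ≤ S1 - ε →
          δ * (cSS * ε / 2) ≤ r * S t + a * r * I t - m * S t
            - (cSS * S t + cSI * I t) * S t - β * S t * I t + γ * I t := by
        intro t ht hL
        have htc : Tc ≤ t := le_trans (le_max_left _ _) ht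
        have ht4 : T4 ≤ t := le_trans (le_max_right _ _) ht
        have ht0 : (0:ℝ) ≤ t := le_trans hTc0 htc
        have hSδ := hSlow t htc
        have hIt := (hpos t ht0).2
        have hIb := hIbd t ht4
        have heq : (cSI + β) * (cSS * ε / (2 * (cSI + β))) = cSS * ε / 2 := by
          field_simp
        have h2 : (cSI + β) * I t ≤ cSS * ε / 2 := by
          have h := mul_le_mul_of_nonneg_left hIb hcβ.le
          linarith [heq]
        have h3 : cSS * ε ≤ (r - m) - cSS * S t := by
          nlinarith [hS1eq, mul_nonneg hcSS.le (show (0:ℝ) ≤ S1 - ε - S t by linarith)]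
        have h4 : cSS * ε / 2 ≤ (r - m) - cSS * S t - (cSI + β) * I t := by linarith
        have h5 : δ * (cSS * ε / 2) ≤ S t * ((r - m) - cSS * S t - (cSI + β) * I t) :=
          mul_le_mul hSδ h4 (by positivity) (by linarith)
        have hid : r * S t + a * r * I t - m * S t
            - (cSS * S t + cSI * I t) * S t - β * S t * I t + γ * I t
            = S t * ((r - m) - cSS * S t - (cSI + β) * I t) + I t * (a * r + γ) := by ring
        rw [hid]
        linarith [h5, mul_nonneg hIt.le (show (0:ℝ) ≤ a * r + γ by positivity)]
      obtain ⟨T, hTT, hT⟩ :=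
        eventually_ge (mul_pos hδ (by positivity)) (fun t ht => hfS t (le_trans hmax0 ht)) hd
      exact ⟨T, le_trans hmax0 hTT, hT⟩
    -- conclude
    have hTS : Tendsto S atTop (𝓝 S1) := by
      rw [Metric.tendsto_atTop]
      intro ε hε
      obtain ⟨Td, _, hdd⟩ := stepD (ε / 2) (by linarith)
      obtain ⟨Te, _, hee⟩ := stepE (ε / 2) (by linarith)
      refine ⟨max Td Te, fun t ht => ?_⟩
      have h1 := hdd t (le_trans (le_max_left _ _) ht)
      have h2 := hee t (le_trans (le_max_right _ _) ht)
      rw [Real.dist_eq, abs_lt]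
      constructor <;> linarith
    have hTI : Tendsto I atTop (𝓝 0) := by
      rw [Metric.tendsto_atTop]
      intro ε hε
      obtain ⟨Tb, hTb0, hb⟩ := stepB (ε / 2) (by linarith)
      refine ⟨Tb, fun t ht => ?_⟩
      have h1 := hb t ht
      have h2 := (hpos t (le_trans hTb0 ht)).2
      rw [Real.dist_eq, sub_zero, abs_lt]
      constructor <;> linarith
    rw [← hS1]
    exact hTS.prodMk_nhds hTI
end

section
/- (Proposition 5, existence, uniqueness and local stability) Assume r > m and β > cIS, and set S1 = (r − m)/cSS, A = (m + γ + μ)/(β − cIS). If S1 > A, then the reduced system possesses exactly one equilibrium (S₊, I₊) with S₊ > 0 and I₊ > 0, and this interior equilibrium is locally asymptotically stable: for every ε > 0 there exists δ > 0 such that every solution starting within distance δ of (S₊, I₊) remains within distance ε of (S₊, I₊) for all t ≥ 0, and there exists δ₀ > 0 such that every solution starting within distance δ₀ of (S₊, I₊) converges to (S₊, I₊) as t → ∞. -/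
open Filter Topology

/-!
Where the `I`-equation vanishes with `I ≠ 0` we have `I = k (S - A)`, `k = (β - cIS) / cII`;
on this line the `S`-equation is a concave quadratic in `S` whose value at `S = A` is
`A (r - m - cSS A)`, positive exactly when `S1 > A`. So interior equilibria are the roots `S > A`
of that quadratic: there is exactly one, and the quadratic is decreasing there, which says
`det J > 0` for the Jacobian `J`; `tr J < 0` follows from the equilibrium equations.
For such `J` the Lyapunov equation `Jᵀ P + P J = -1` has a positive definite solution, and since
the nonlinearity is quadratic, `W = ⟨P x, x⟩` in shifted coordinates satisfies `W' ≤ -c W` near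
the equilibrium; a comparison argument then gives exponential decay of `W`.
-/

open Real

section Quadratic

variable {L B C A y : ℝ}

theorem lt_mul_add_of_quadratic_root_gt (hA : 0 < -L * A ^ 2 + B * A + C) (hy : A < y)
    (hroot : -L * y ^ 2 + B * y + C = 0) : B < L * (A + y) := by
  nlinarith

theorem lt_two_mul_of_quadratic_root_gt (hL : 0 < L) (hA : 0 < -L * A ^ 2 + B * A + C)
    (hy : A < y) (hroot : -L * y ^ 2 + B * y + C = 0) : B < 2 * L * y := by
  nlinarith [lt_mul_add_of_quadratic_root_gt hA hy hroot]

theorem existsUnique_quadratic_root_gt (hL : 0 < L) (hA : 0 < -L * A ^ 2 + B * A + C) :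
    ∃! x, A < x ∧ -L * x ^ 2 + B * x + C = 0 := by
  set D := B ^ 2 + 4 * L * C
  have hD : (2 * L * A - B) ^ 2 < D := by nlinarith
  have hsqrt : √D ^ 2 = D := Real.sq_sqrt ((sq_nonneg _).trans hD.le)
  set x := (B + √D) / (2 * L)
  have hx : 2 * L * x = B + √D := mul_div_cancel₀ _ (by positivity)
  have hAx : A < x := by nlinarith [Real.lt_sqrt_of_sq_lt hD]
  have hroot : -L * x ^ 2 + B * x + C = 0 := by
    have : L * (4 * (-L * x ^ 2 + B * x + C)) = 0 := by
      linear_combination (-(2 * L * x - B + √D)) * hx - hsqrt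
    simpa [hL.ne'] using this
  refine ⟨x, ⟨hAx, hroot⟩, fun y ⟨hAy, hy⟩ => ?_⟩
  have hB : B < L * (A + y) := lt_mul_add_of_quadratic_root_gt hA hAy hy
  have : (y - x) * (B - L * (x + y)) = 0 := by linear_combination hy - hroot
  have hne : B - L * (x + y) ≠ 0 := by nlinarith
  exact sub_eq_zero.1 ((mul_eq_zero.1 this).resolve_right hne)

end Quadratic

theorem le_mul_exp_neg_mul_of_hasDerivAt {W W' : ℝ → ℝ} {b c t : ℝ} (hc : 0 < c)
    (hW : ∀ τ, 0 ≤ τ → HasDerivAt W (W' τ) τ) (hW0 : 0 ≤ W 0) (hb : W 0 < b)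
    (hdecr : ∀ τ, 0 ≤ τ → W τ < b → W' τ ≤ -c * W τ) (ht : 0 ≤ t) :
    W t ≤ W 0 * exp (-c * t) := by
  -- `W 0 * exp (-c x) + ε` is a strict upper fence: where `W` touches it, `W < b`, so there
  -- `W' ≤ -c W` is strictly below the fence's slope.
  have fence : ∀ ε, 0 < ε → ε < b - W 0 → W t ≤ W 0 * exp (-c * t) + ε := by
    intro ε hε hεb
    have hB : ∀ x, HasDerivAt (fun x => W 0 * exp (-c * x) + ε) (-c * (W 0 * exp (-c * x))) x :=
      fun x => (((((hasDerivAt_id' x).const_mul (-c)).exp).const_mul (W 0)).add_const ε).congr_deriv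
        (by ring)
    refine image_le_of_deriv_right_lt_deriv_boundary (a := 0)
      (fun x hx => (hW x hx.1).continuousAt.continuousWithinAt)
      (fun x hx => (hW x hx.1).hasDerivWithinAt) (by simp [hε.le]) hB
      (fun x hx hWx => ?_) ⟨ht, le_rfl⟩
    have hexp : exp (-c * x) ≤ 1 := exp_le_one_iff.2 (by nlinarith [hx.1])
    have hWb : W x < b := by rw [hWx]; nlinarith
    calc W' x ≤ -c * W x := hdecr x hx.1 hWb
      _ < -c * (W 0 * exp (-c * x)) := by rw [hWx]; nlinarith
  by_contra! h
  have := fence (min ((W t - W 0 * exp (-c * t)) / 2) ((b - W 0) / 2)) (by positivity)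
    ((min_le_right _ _).trans_lt (by linarith))
  linarith [min_le_left ((W t - W 0 * exp (-c * t)) / 2) ((b - W 0) / 2)]

def quadForm (p q s u v : ℝ) : ℝ := p * u ^ 2 + 2 * q * (u * v) + s * v ^ 2

theorem abs_quadForm_le (p q s u v : ℝ) :
    |quadForm p q s u v| ≤ (|p| + |q| + |s|) * (u ^ 2 + v ^ 2) := by
  have huv : 2 * |u * v| ≤ u ^ 2 + v ^ 2 := by
    rw [abs_mul, ← sq_abs u, ← sq_abs v]; linarith [two_mul_le_add_sq |u| |v|]
  unfold quadForm
  calc |p * u ^ 2 + 2 * q * (u * v) + s * v ^ 2|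
      ≤ |p * u ^ 2| + |2 * q * (u * v)| + |s * v ^ 2| := abs_add_three _ _ _
    _ = |p| * u ^ 2 + |q| * (2 * |u * v|) + |s| * v ^ 2 := by
        simp only [abs_mul, abs_two, abs_sq]; ring
    _ ≤ (|p| + |q| + |s|) * (u ^ 2 + v ^ 2) := by
        nlinarith [abs_nonneg p, abs_nonneg q, abs_nonneg s, sq_nonneg u, sq_nonneg v]

theorem mul_le_quadForm {p q s : ℝ} (hp : 0 < p) (hs : 0 < s) (u v : ℝ) :
    (p * s - q ^ 2) / (p + s) * (u ^ 2 + v ^ 2) ≤ quadForm p q s u v := by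
  rw [div_mul_eq_mul_div, div_le_iff₀ (by linarith), quadForm]
  nlinarith [sq_nonneg (p * u + q * v), sq_nonneg (q * u + s * v)]

theorem HasDerivAt.quadForm {u v : ℝ → ℝ} {u' v' t : ℝ} (p q s : ℝ) (hu : HasDerivAt u u' t)
    (hv : HasDerivAt v v' t) :
    HasDerivAt (fun τ => _root_.quadForm p q s (u τ) (v τ))
      (2 * (p * u t + q * v t) * u' + 2 * (q * u t + s * v t) * v') t := by
  unfold _root_.quadForm
  exact ((((hu.fun_pow 2).const_mul p).add ((hu.fun_mul hv).const_mul (2 * q))).add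
    ((hv.fun_pow 2).const_mul s)).congr_deriv (by ring)

section Lyapunov

variable {a₁₁ a₁₂ a₂₁ a₂₂ : ℝ}

theorem exists_lyapunov_quadForm (htr : a₁₁ + a₂₂ < 0) (hdet : 0 < a₁₁ * a₂₂ - a₁₂ * a₂₁) :
    ∃ p q s : ℝ, 0 < p ∧ 0 < s ∧ q ^ 2 < p * s ∧ ∀ u v : ℝ,
      2 * (p * u + q * v) * (a₁₁ * u + a₁₂ * v) + 2 * (q * u + s * v) * (a₂₁ * u + a₂₂ * v)
        = -(u ^ 2 + v ^ 2) := by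
  set Δ := a₁₁ * a₂₂ - a₁₂ * a₂₁
  set τ := a₁₁ + a₂₂
  have hτ : τ ≠ 0 := htr.ne
  have hΔ : Δ ≠ 0 := hdet.ne'
  have hden : 0 < -2 * τ * Δ := by nlinarith
  -- the solution `P = [[p, q], [q, s]]` of the Lyapunov equation `Jᵀ P + P J = -1`
  refine ⟨(Δ + a₂₁ ^ 2 + a₂₂ ^ 2) / (-2 * τ * Δ), (a₁₁ * a₂₁ + a₁₂ * a₂₂) / (2 * τ * Δ),
    (Δ + a₁₁ ^ 2 + a₁₂ ^ 2) / (-2 * τ * Δ), by positivity, by positivity, ?_, fun u v => ?_⟩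
  · have hdiff : (Δ + a₂₁ ^ 2 + a₂₂ ^ 2) / (-2 * τ * Δ) * ((Δ + a₁₁ ^ 2 + a₁₂ ^ 2) / (-2 * τ * Δ))
        - ((a₁₁ * a₂₁ + a₁₂ * a₂₂) / (2 * τ * Δ)) ^ 2
        = (τ ^ 2 + (a₁₂ - a₂₁) ^ 2) / (4 * Δ * τ ^ 2) := by
      field_simp; ring
    have : 0 < (τ ^ 2 + (a₁₂ - a₂₁) ^ 2) / (4 * Δ * τ ^ 2) := by positivity
    linarith
  · field_simp; ring

theorem lyapunov_deriv_le {p q s n₁ n₂ K₁ K₂ ρ u v : ℝ}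
    (hP : 2 * (p * u + q * v) * (a₁₁ * u + a₁₂ * v) + 2 * (q * u + s * v) * (a₂₁ * u + a₂₂ * v)
        = -(u ^ 2 + v ^ 2))
    (hn₁ : |n₁| ≤ K₁ * (u ^ 2 + v ^ 2)) (hn₂ : |n₂| ≤ K₂ * (u ^ 2 + v ^ 2))
    (hu : |u| ≤ ρ) (hv : |v| ≤ ρ) (hρ : 2 * ((|p| + |q|) * K₁ + (|q| + |s|) * K₂) * ρ ≤ 1 / 2) :
    2 * (p * u + q * v) * (a₁₁ * u + a₁₂ * v + n₁) + 2 * (q * u + s * v) * (a₂₁ * u + a₂₂ * v + n₂)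
      ≤ -(u ^ 2 + v ^ 2) / 2 := by
  have hρ₀ : 0 ≤ ρ := (abs_nonneg u).trans hu
  have hlin : ∀ x y : ℝ, |x * u + y * v| ≤ (|x| + |y|) * ρ := fun x y => by
    calc |x * u + y * v| ≤ |x| * |u| + |y| * |v| := by
          simpa only [abs_mul] using abs_add_le (x * u) (y * v)
      _ ≤ (|x| + |y|) * ρ := by nlinarith [abs_nonneg x, abs_nonneg y]
  have hr₁ : (p * u + q * v) * n₁ ≤ (|p| + |q|) * ρ * (K₁ * (u ^ 2 + v ^ 2)) :=
    (le_abs_self _).trans (by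
      rw [abs_mul]; exact mul_le_mul (hlin p q) hn₁ (abs_nonneg _) (mul_nonneg (by positivity) hρ₀))
  have hr₂ : (q * u + s * v) * n₂ ≤ (|q| + |s|) * ρ * (K₂ * (u ^ 2 + v ^ 2)) :=
    (le_abs_self _).trans (by
      rw [abs_mul]; exact mul_le_mul (hlin q s) hn₂ (abs_nonneg _) (mul_nonneg (by positivity) hρ₀))
  nlinarith [sq_nonneg u, sq_nonneg v]

end Lyapunov

theorem exists_sq_decay_of_trace_neg_of_det_pos {J : Matrix (Fin 2) (Fin 2) ℝ}
    (htr : J.trace < 0) (hdet : 0 < J.det) {N₁ N₂ : ℝ → ℝ → ℝ} {K₁ K₂ : ℝ}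
    (hN₁ : ∀ u v, |N₁ u v| ≤ K₁ * (u ^ 2 + v ^ 2)) (hN₂ : ∀ u v, |N₂ u v| ≤ K₂ * (u ^ 2 + v ^ 2)) :
    ∃ δ > 0, ∃ C > 0, ∃ c > 0, ∀ u v : ℝ → ℝ,
      (∀ t, 0 ≤ t → HasDerivAt u (J 0 0 * u t + J 0 1 * v t + N₁ (u t) (v t)) t ∧
        HasDerivAt v (J 1 0 * u t + J 1 1 * v t + N₂ (u t) (v t)) t) →
      u 0 ^ 2 + v 0 ^ 2 < δ →
      ∀ t, 0 ≤ t → u t ^ 2 + v t ^ 2 ≤ C * (u 0 ^ 2 + v 0 ^ 2) * exp (-c * t) := by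
  rw [Matrix.trace_fin_two] at htr
  rw [Matrix.det_fin_two] at hdet
  obtain ⟨p, q, s, hp, hs, hqs, hP⟩ := exists_lyapunov_quadForm htr hdet
  set α := (p * s - q ^ 2) / (p + s)
  have hα : 0 < α := div_pos (by linarith) (by linarith)
  set Λ := |p| + |q| + |s|
  have hΛ : 0 < Λ := by have := abs_pos.2 hp.ne'; positivity
  obtain ⟨ρ, hρ, hρK⟩ := exists_pos_mul_lt one_half_pos (2 * ((|p| + |q|) * K₁ + (|q| + |s|) * K₂))
  refine ⟨α * ρ ^ 2 / Λ, by positivity, Λ / α, by positivity, 1 / (2 * Λ), by positivity, ?_⟩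
  intro u v hsol h0 t ht
  set W := fun τ => quadForm p q s (u τ) (v τ)
  have hWlow : ∀ τ, α * (u τ ^ 2 + v τ ^ 2) ≤ W τ := fun τ => mul_le_quadForm hp hs _ _
  have hWup : ∀ τ, W τ ≤ Λ * (u τ ^ 2 + v τ ^ 2) := fun τ =>
    (le_abs_self _).trans (abs_quadForm_le _ _ _ _ _)
  have hW0 : W 0 < α * ρ ^ 2 := (hWup 0).trans_lt (by rwa [lt_div_iff₀ hΛ, mul_comm] at h0)
  have hdecr : ∀ τ, 0 ≤ τ → W τ < α * ρ ^ 2 →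
      2 * (p * u τ + q * v τ) * (J 0 0 * u τ + J 0 1 * v τ + N₁ (u τ) (v τ))
        + 2 * (q * u τ + s * v τ) * (J 1 0 * u τ + J 1 1 * v τ + N₂ (u τ) (v τ))
        ≤ -(1 / (2 * Λ)) * W τ := by
    intro τ _ hWτ
    have hn : u τ ^ 2 + v τ ^ 2 < ρ ^ 2 := lt_of_mul_lt_mul_left ((hWlow τ).trans_lt hWτ) hα.le
    have hWn : 1 / (2 * Λ) * W τ ≤ (u τ ^ 2 + v τ ^ 2) / 2 := by
      rw [div_mul_eq_mul_div, one_mul, div_le_div_iff₀ (by positivity) two_pos]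
      nlinarith [hWup τ]
    have := lyapunov_deriv_le (hP (u τ) (v τ)) (hN₁ _ _) (hN₂ _ _)
      (abs_le_of_sq_le_sq (by nlinarith) hρ.le) (abs_le_of_sq_le_sq (by nlinarith) hρ.le) hρK.le
    linarith
  have hdecay := le_mul_exp_neg_mul_of_hasDerivAt (by positivity)
    (fun τ hτ => (hsol τ hτ).1.quadForm p q s (hsol τ hτ).2)
    ((mul_nonneg hα.le (by positivity)).trans (hWlow 0)) hW0 hdecr ht
  calc u t ^ 2 + v t ^ 2 ≤ W t / α := by rw [le_div_iff₀ hα, mul_comm]; exact hWlow t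
    _ ≤ W 0 * exp (-(1 / (2 * Λ)) * t) / α := by gcongr
    _ ≤ Λ * (u 0 ^ 2 + v 0 ^ 2) * exp (-(1 / (2 * Λ)) * t) / α := by gcongr; exact hWup 0
    _ = Λ / α * (u 0 ^ 2 + v 0 ^ 2) * exp (-(1 / (2 * Λ)) * t) := by ring

section ExponentialStability

variable {X : Type*} [PseudoMetricSpace X] {P : (ℝ → X) → Prop} {e : X} {δ C c : ℝ}

theorem forall_dist_lt_of_sq_dist_decay (hδ : 0 < δ) (hc : 0 ≤ c)
    (h : ∀ x, P x → dist (x 0) e ^ 2 < δ →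
      ∀ t, 0 ≤ t → dist (x t) e ^ 2 ≤ C * dist (x 0) e ^ 2 * exp (-c * t)) :
    ∀ ε > 0, ∃ η > 0, ∀ x, P x → dist (x 0) e < η → ∀ t, 0 ≤ t → dist (x t) e < ε := by
  intro ε hε
  refine ⟨min (√δ) (ε / (|C| + 1)), by positivity, fun x hx h0 t ht => ?_⟩
  have hδ0 : dist (x 0) e ^ 2 < δ :=
    (Real.lt_sqrt dist_nonneg).1 (h0.trans_le (min_le_left _ _))
  have hε0 : (|C| + 1) * dist (x 0) e < ε := by
    have := h0.trans_le (min_le_right _ _)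
    rwa [lt_div_iff₀ (by positivity), mul_comm] at this
  have hexp : exp (-c * t) ≤ 1 := exp_le_one_iff.2 (by nlinarith)
  refine (pow_lt_pow_iff_left₀ dist_nonneg hε.le two_ne_zero).1 ?_
  calc dist (x t) e ^ 2 ≤ C * dist (x 0) e ^ 2 * exp (-c * t) := h x hx hδ0 t ht
    _ ≤ |C| * dist (x 0) e ^ 2 * 1 := by gcongr; exact le_abs_self C
    _ ≤ ((|C| + 1) * dist (x 0) e) ^ 2 := by nlinarith [abs_nonneg C, sq_nonneg (dist (x 0) e)]
    _ < ε ^ 2 := by gcongr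

theorem tendsto_of_sq_dist_decay (hδ : 0 < δ) (hc : 0 < c)
    (h : ∀ x, P x → dist (x 0) e ^ 2 < δ →
      ∀ t, 0 ≤ t → dist (x t) e ^ 2 ≤ C * dist (x 0) e ^ 2 * exp (-c * t)) :
    ∃ η > 0, ∀ x, P x → dist (x 0) e < η → Tendsto x atTop (𝓝 e) := by
  refine ⟨√δ, by positivity, fun x hx h0 => ?_⟩
  have hδ0 : dist (x 0) e ^ 2 < δ := (Real.lt_sqrt dist_nonneg).1 h0
  have hlim : Tendsto (fun t => √(C * dist (x 0) e ^ 2 * exp (-c * t))) atTop (𝓝 0) := by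
    have : Tendsto (fun t => -c * t) atTop atBot :=
      tendsto_id.const_mul_atTop_of_neg (neg_lt_zero.2 hc)
    simpa using ((tendsto_exp_atBot.comp this).const_mul (C * dist (x 0) e ^ 2)).sqrt
  refine tendsto_iff_dist_tendsto_zero.2 (squeeze_zero' (Eventually.of_forall fun _ => dist_nonneg)
    ?_ hlim)
  filter_upwards [eventually_ge_atTop 0] with t ht
  exact Real.le_sqrt_of_sq_le (h x hx hδ0 t ht)

end ExponentialStability

theorem dist_sq_le_sq_add_sq (x y : ℝ × ℝ) : dist x y ^ 2 ≤ (x.1 - y.1) ^ 2 + (x.2 - y.2) ^ 2 := by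
  rw [Prod.dist_eq, Real.dist_eq, Real.dist_eq]
  rcases le_total |x.1 - y.1| |x.2 - y.2| with h | h
  · rw [max_eq_right h, sq_abs]; nlinarith [sq_nonneg (x.1 - y.1)]
  · rw [max_eq_left h, sq_abs]; nlinarith [sq_nonneg (x.2 - y.2)]

theorem sq_add_sq_le_two_mul_dist_sq (x y : ℝ × ℝ) :
    (x.1 - y.1) ^ 2 + (x.2 - y.2) ^ 2 ≤ 2 * dist x y ^ 2 := by
  rw [Prod.dist_eq, Real.dist_eq, Real.dist_eq, ← sq_abs (x.1 - y.1), ← sq_abs (x.2 - y.2)]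
  have h₁ := pow_le_pow_left₀ (abs_nonneg _) (le_max_left |x.1 - y.1| |x.2 - y.2|) 2
  have h₂ := pow_le_pow_left₀ (abs_nonneg _) (le_max_right |x.1 - y.1| |x.2 - y.2|) 2
  linarith

def jacobian (r m β γ μ cSS cSI cIS cII a s i : ℝ) : Matrix (Fin 2) (Fin 2) ℝ :=
  !![r - m - 2 * cSS * s - (cSI + β) * i, a * r + γ - (cSI + β) * s;
    (β - cIS) * i, (β - cIS) * s - 2 * cII * i - (m + γ + μ)]

section ReducedSystem

variable {r m β γ μ cSS cSI cIS cII a k A s i : ℝ}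

local notation "𝒥" => jacobian r m β γ μ cSS cSI cIS cII a

theorem IsSol.hasDerivAt_sub {S I : ℝ → ℝ} {t : ℝ} (hsol : IsSol r m β γ μ cSS cSI cIS cII a S I)
    (heq : IsEquilibrium r m β γ μ cSS cSI cIS cII a s i) (ht : 0 ≤ t) :
    HasDerivAt (fun τ => S τ - s) (𝒥 s i 0 0 * (S t - s) + 𝒥 s i 0 1 * (I t - i)
      + quadForm (-cSS) (-(cSI + β) / 2) 0 (S t - s) (I t - i)) t ∧
    HasDerivAt (fun τ => I τ - i) (𝒥 s i 1 0 * (S t - s) + 𝒥 s i 1 1 * (I t - i)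
      + quadForm 0 ((β - cIS) / 2) (-cII) (S t - s) (I t - i)) t := by
  obtain ⟨hS, hI⟩ := hsol t ht
  refine ⟨(hS.sub_const s).congr_deriv ?_, (hI.sub_const i).congr_deriv ?_⟩ <;>
    simp only [jacobian, quadForm, Matrix.of_apply, Matrix.cons_val_zero, Matrix.cons_val_one]
  · linear_combination heq.1
  · linear_combination heq.2

theorem trace_jacobian_neg (hp : ParamsPos r m β γ μ cSS cSI cIS cII a)
    (heq : IsEquilibrium r m β γ μ cSS cSI cIS cII a s i) (hs : 0 < s) (hi : 0 < i) :
    (𝒥 s i).trace < 0 := by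
  obtain ⟨hr, -, -, hγ, -, hcSS, -, -, hcII, ha, -⟩ := hp
  have hrel : (β - cIS) * s - 2 * cII * i - (m + γ + μ) = -(cII * i) := by
    have : i * ((β - cIS) * s - cII * i - (m + γ + μ)) = 0 := by linear_combination heq.2
    linear_combination (mul_eq_zero.1 this).resolve_left hi.ne'
  have h₁₁ : s * (r - m - 2 * cSS * s - (cSI + β) * i) = -(cSS * s ^ 2) - (a * r + γ) * i := by
    linear_combination heq.1
  rw [jacobian, Matrix.trace_fin_two_of, hrel]
  have : r - m - 2 * cSS * s - (cSI + β) * i < 0 := by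
    refine neg_of_mul_neg_right (h₁₁ ▸ ?_) hs.le
    nlinarith [mul_pos hcSS (pow_pos hs 2), mul_pos (mul_pos ha hr) hi, mul_pos hγ hi]
  nlinarith [mul_pos hcII hi]

theorem det_jacobian_pos (hcII : 0 < cII) (hk : cII * k = β - cIS)
    (hA : (β - cIS) * A = m + γ + μ) (hi : 0 < i) (hik : i = k * (s - A))
    (hslope : r - m + k * (a * r + γ) + k * A * (cSI + β) < 2 * (cSS + k * (cSI + β)) * s) :
    0 < (𝒥 s i).det := by
  rw [jacobian, Matrix.det_fin_two_of]
  have hpos := mul_pos (mul_pos hcII hi) (sub_pos.2 hslope)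
  subst hik
  linear_combination hpos + ((r - m - 2 * cSS * s - (cSI + β) * (k * (s - A))) * (s - A)
    - (a * r + γ - (cSI + β) * s) * (k * (s - A))) * hk
    - (r - m - 2 * cSS * s - (cSI + β) * (k * (s - A))) * hA

theorem isEquilibrium_iff (hcII : cII ≠ 0) (hk : cII * k = β - cIS)
    (hA : (β - cIS) * A = m + γ + μ) (hi : i ≠ 0) :
    IsEquilibrium r m β γ μ cSS cSI cIS cII a s i ↔ i = k * (s - A) ∧
      -(cSS + k * (cSI + β)) * s ^ 2 + (r - m + k * (a * r + γ) + k * A * (cSI + β)) * s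
        + -(k * A * (a * r + γ)) = 0 := by
  constructor
  · rintro ⟨h₁, h₂⟩
    have hline : (β - cIS) * s - cII * i - (m + γ + μ) = 0 := by
      have : i * ((β - cIS) * s - cII * i - (m + γ + μ)) = 0 := by linear_combination h₂
      exact (mul_eq_zero.1 this).resolve_left hi
    have hik : i = k * (s - A) := by
      have : cII * (i - k * (s - A)) = 0 := by linear_combination -hline + (A - s) * hk + hA
      exact sub_eq_zero.1 ((mul_eq_zero.1 this).resolve_left hcII)
    subst hik
    exact ⟨rfl, by linear_combination h₁⟩
  · rintro ⟨rfl, hq⟩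
    exact ⟨by linear_combination hq, by linear_combination k * (s - A) * ((A - s) * hk + hA)⟩

theorem exists_unique_interior_equilibrium (hp : ParamsPos r m β γ μ cSS cSI cIS cII a)
    (hβc : cIS < β) (hSA : (m + γ + μ) / (β - cIS) < (r - m) / cSS) :
    ∃ Sp Ip : ℝ, 0 < Sp ∧ 0 < Ip ∧ IsEquilibrium r m β γ μ cSS cSI cIS cII a Sp Ip ∧
      (∀ s i : ℝ, 0 < s → 0 < i →
        IsEquilibrium r m β γ μ cSS cSI cIS cII a s i → s = Sp ∧ i = Ip) ∧
      (𝒥 Sp Ip).trace < 0 ∧ 0 < (𝒥 Sp Ip).det := by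
  have ⟨_, hm, hβ, hγ, hμ, hcSS, hcSI, _, hcII, _, _⟩ := hp
  set k := (β - cIS) / cII
  set A := (m + γ + μ) / (β - cIS)
  have hβc' : 0 < β - cIS := sub_pos.2 hβc
  have hk : cII * k = β - cIS := mul_div_cancel₀ _ hcII.ne'
  have hA : (β - cIS) * A = m + γ + μ := mul_div_cancel₀ _ hβc'.ne'
  have hk₀ : 0 < k := div_pos hβc' hcII
  have hA₀ : 0 < A := div_pos (by positivity) hβc'
  have hL : 0 < cSS + k * (cSI + β) := by positivity
  have hqA : 0 < -(cSS + k * (cSI + β)) * A ^ 2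
      + (r - m + k * (a * r + γ) + k * A * (cSI + β)) * A + -(k * A * (a * r + γ)) := by
    have : cSS * A < r - m := (lt_div_iff₀' hcSS).1 hSA
    nlinarith
  have hiff := fun s i (hi : 0 < i) =>
    isEquilibrium_iff (r := r) (cSS := cSS) (cSI := cSI) (a := a) (s := s) hcII.ne' hk hA hi.ne'
  obtain ⟨Sp, ⟨hASp, hroot⟩, huniq⟩ := existsUnique_quadratic_root_gt hL hqA
  have hIp : 0 < k * (Sp - A) := mul_pos hk₀ (sub_pos.2 hASp)
  have heq := (hiff Sp _ hIp).2 ⟨rfl, hroot⟩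
  refine ⟨Sp, _, hA₀.trans hASp, hIp, heq, fun s i _ hi he => ?_,
    trace_jacobian_neg hp heq (hA₀.trans hASp) hIp,
    det_jacobian_pos hcII hk hA hIp rfl (lt_two_mul_of_quadratic_root_gt hL hqA hASp hroot)⟩
  obtain ⟨rfl, hs⟩ := (hiff s i hi).1 he
  obtain rfl := huniq s ⟨sub_pos.1 (pos_of_mul_pos_right hi hk₀.le), hs⟩
  exact ⟨rfl, rfl⟩

theorem IsEquilibrium.stable_and_attracting {Sp Ip : ℝ}
    (heq : IsEquilibrium r m β γ μ cSS cSI cIS cII a Sp Ip) (htr : (𝒥 Sp Ip).trace < 0)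
    (hdet : 0 < (𝒥 Sp Ip).det) :
    (∀ ε : ℝ, 0 < ε → ∃ δ : ℝ, 0 < δ ∧
        ∀ S I : ℝ → ℝ, IsSol r m β γ μ cSS cSI cIS cII a S I →
          dist ((S 0, I 0) : ℝ × ℝ) (Sp, Ip) < δ →
          ∀ t : ℝ, 0 ≤ t → dist ((S t, I t) : ℝ × ℝ) (Sp, Ip) < ε) ∧
      (∃ δ₀ : ℝ, 0 < δ₀ ∧
        ∀ S I : ℝ → ℝ, IsSol r m β γ μ cSS cSI cIS cII a S I →
          dist ((S 0, I 0) : ℝ × ℝ) (Sp, Ip) < δ₀ →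
          Tendsto (fun t => (S t, I t)) atTop (𝓝 ((Sp, Ip) : ℝ × ℝ))) := by
  obtain ⟨δ, hδ, C, hC, c, hc, hdecay⟩ := exists_sq_decay_of_trace_neg_of_det_pos htr hdet
    (abs_quadForm_le (-cSS) (-(cSI + β) / 2) 0) (abs_quadForm_le 0 ((β - cIS) / 2) (-cII))
  have h : ∀ x : ℝ → ℝ × ℝ,
      IsSol r m β γ μ cSS cSI cIS cII a (fun t => (x t).1) (fun t => (x t).2) →
      dist (x 0) (Sp, Ip) ^ 2 < δ / 2 →
      ∀ t, 0 ≤ t → dist (x t) (Sp, Ip) ^ 2 ≤ 2 * C * dist (x 0) (Sp, Ip) ^ 2 * exp (-c * t) := by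
    intro x hx h0 t ht
    have h0' := sq_add_sq_le_two_mul_dist_sq (x 0) (Sp, Ip)
    calc dist (x t) (Sp, Ip) ^ 2 ≤ ((x t).1 - Sp) ^ 2 + ((x t).2 - Ip) ^ 2 :=
          dist_sq_le_sq_add_sq _ _
      _ ≤ C * (((x 0).1 - Sp) ^ 2 + ((x 0).2 - Ip) ^ 2) * exp (-c * t) :=
          hdecay (fun t => (x t).1 - Sp) (fun t => (x t).2 - Ip)
            (fun τ hτ => hx.hasDerivAt_sub heq hτ) (by linarith) t ht
      _ ≤ C * (2 * dist (x 0) (Sp, Ip) ^ 2) * exp (-c * t) := by gcongr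
      _ = 2 * C * dist (x 0) (Sp, Ip) ^ 2 * exp (-c * t) := by ring
  obtain ⟨δ₀, hδ₀, hattr⟩ := tendsto_of_sq_dist_decay (by positivity) hc h
  refine ⟨fun ε hε => ?_, δ₀, hδ₀, fun S I hsol => hattr (fun t => (S t, I t)) hsol⟩
  obtain ⟨η, hη, hstab⟩ := forall_dist_lt_of_sq_dist_decay (by positivity) hc.le h ε hε
  exact ⟨η, hη, fun S I hsol => hstab (fun t => (S t, I t)) hsol⟩

end ReducedSystem

theorem prop5_interior_equilibrium_general
    (r m β γ μ cSS cSI cIS cII a : ℝ)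
    (hp : ParamsPos r m β γ μ cSS cSI cIS cII a)
    (hβc : cIS < β)
    (hSA : (m + γ + μ) / (β - cIS) < (r - m) / cSS) :
    ∃ Sp Ip : ℝ, 0 < Sp ∧ 0 < Ip ∧
      IsEquilibrium r m β γ μ cSS cSI cIS cII a Sp Ip ∧
      (∀ s i : ℝ, 0 < s → 0 < i →
        IsEquilibrium r m β γ μ cSS cSI cIS cII a s i → s = Sp ∧ i = Ip) ∧
      (∀ ε : ℝ, 0 < ε → ∃ δ : ℝ, 0 < δ ∧
        ∀ S I : ℝ → ℝ, IsSol r m β γ μ cSS cSI cIS cII a S I →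
          dist ((S 0, I 0) : ℝ × ℝ) (Sp, Ip) < δ →
          ∀ t : ℝ, 0 ≤ t → dist ((S t, I t) : ℝ × ℝ) (Sp, Ip) < ε) ∧
      (∃ δ₀ : ℝ, 0 < δ₀ ∧
        ∀ S I : ℝ → ℝ, IsSol r m β γ μ cSS cSI cIS cII a S I →
          dist ((S 0, I 0) : ℝ × ℝ) (Sp, Ip) < δ₀ →
          Tendsto (fun t => (S t, I t)) atTop (𝓝 ((Sp, Ip) : ℝ × ℝ))) := by
  obtain ⟨Sp, Ip, hSp, hIp, heq, huniq, htr, hdet⟩ := exists_unique_interior_equilibrium hp hβc hSA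
  exact ⟨Sp, Ip, hSp, hIp, heq, huniq, heq.stable_and_attracting htr hdet⟩

/-- Proposition 5 (existence, uniqueness and local stability): if `S1 > A`
there is exactly one interior equilibrium and it is locally asymptotically
stable. -/
theorem prop5_interior_equilibrium
    (r m β γ μ cSS cSI cIS cII a : ℝ)
    (hp : ParamsPos r m β γ μ cSS cSI cIS cII a)
    (hrm : m < r) (hβc : cIS < β)
    (hSA : (m + γ + μ) / (β - cIS) < (r - m) / cSS) :
    ∃ Sp Ip : ℝ, 0 < Sp ∧ 0 < Ip ∧
      IsEquilibrium r m β γ μ cSS cSI cIS cII a Sp Ip ∧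
      (∀ s i : ℝ, 0 < s → 0 < i →
        IsEquilibrium r m β γ μ cSS cSI cIS cII a s i → s = Sp ∧ i = Ip) ∧
      (∀ ε : ℝ, 0 < ε → ∃ δ : ℝ, 0 < δ ∧
        ∀ S I : ℝ → ℝ, IsSol r m β γ μ cSS cSI cIS cII a S I →
          dist ((S 0, I 0) : ℝ × ℝ) (Sp, Ip) < δ →
          ∀ t : ℝ, 0 ≤ t → dist ((S t, I t) : ℝ × ℝ) (Sp, Ip) < ε) ∧
      (∃ δ₀ : ℝ, 0 < δ₀ ∧
        ∀ S I : ℝ → ℝ, IsSol r m β γ μ cSS cSI cIS cII a S I →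
          dist ((S 0, I 0) : ℝ × ℝ) (Sp, Ip) < δ₀ →
          Tendsto (fun t => (S t, I t)) atTop (𝓝 ((Sp, Ip) : ℝ × ℝ))) :=
  prop5_interior_equilibrium_general r m β γ μ cSS cSI cIS cII a hp hβc hSA
end
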